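/- arXiv:2412.21068 — 7 statements merged into one kernel-verified Lean document; each statement's English description precedes it below -/
import Mathlib

section
/- Let A ∈ ℝ^{m×n} (m ≤ n) have full row rank m, let β > 0, and let M be the primal-dual update matrix of A with parameter β. Let σ > 0 and v ∈ ℝ^n satisfy AᵀAv = σ²v and v ≠ 0, and suppose βσ ≥ 2. Then each of the two numbers λ = (βσ² + √(β²σ⁴ − 4σ²))/2 and λ = (βσ² − √(β²σ⁴ − 4σ²))/2 is a positive real number, and the vector x = (v, −(1/λ)·Av) ∈ ℝ^{n+m} is nonzero and satisfies M x = λ x. -/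
open Matrix Real

/-- For the primal-dual update matrix `M = [[β AᵀA, Aᵀ], [−A, 0]]` of a
full-row-rank matrix `A`, each of `λ = (βσ² ± √(β²σ⁴ − 4σ²))/2` is positive and
`x = (v, −(1/λ)·Av)` is a nonzero eigenvector of `M` with eigenvalue `λ`, whenever
`AᵀAv = σ²v`, `v ≠ 0`, `σ > 0` and `βσ ≥ 2`. -/
theorem stmt0 (m n : ℕ) (hmn : m ≤ n) (A : Matrix (Fin m) (Fin n) ℝ)
    (hrank : A.rank = m) (β : ℝ) (hβ : 0 < β)
    (M : Matrix (Fin n ⊕ Fin m) (Fin n ⊕ Fin m) ℝ)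
    (hM : M = Matrix.fromBlocks (β • (Aᵀ * A)) Aᵀ (-A) 0)
    (σ : ℝ) (hσ : 0 < σ) (v : Fin n → ℝ) (hv : v ≠ 0)
    (heig : (Aᵀ * A).mulVec v = (σ ^ 2) • v)
    (hβσ : 2 ≤ β * σ) :
    ∀ lam ∈ ({(β * σ ^ 2 + Real.sqrt (β ^ 2 * σ ^ 4 - 4 * σ ^ 2)) / 2,
              (β * σ ^ 2 - Real.sqrt (β ^ 2 * σ ^ 4 - 4 * σ ^ 2)) / 2} : Set ℝ),
      0 < lam ∧
      (Sum.elim v (fun j => -(1 / lam) * (A.mulVec v) j)) ≠ 0 ∧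
      M.mulVec (Sum.elim v (fun j => -(1 / lam) * (A.mulVec v) j)) =
        lam • (Sum.elim v (fun j => -(1 / lam) * (A.mulVec v) j)) := by
  have h4 : 4 ≤ (β * σ) ^ 2 := by nlinarith
  have hD : 0 ≤ β ^ 2 * σ ^ 4 - 4 * σ ^ 2 := by
    nlinarith [mul_le_mul_of_nonneg_left h4 (sq_nonneg σ)]
  have hs2 : Real.sqrt (β ^ 2 * σ ^ 4 - 4 * σ ^ 2) ^ 2 = β ^ 2 * σ ^ 4 - 4 * σ ^ 2 :=
    Real.sq_sqrt hD
  have hsnn : 0 ≤ Real.sqrt (β ^ 2 * σ ^ 4 - 4 * σ ^ 2) := Real.sqrt_nonneg _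
  have hslt : Real.sqrt (β ^ 2 * σ ^ 4 - 4 * σ ^ 2) < β * σ ^ 2 := by
    rw [show β * σ ^ 2 = Real.sqrt ((β * σ ^ 2) ^ 2) by
      rw [Real.sqrt_sq (by positivity)]]
    apply Real.sqrt_lt_sqrt hD
    nlinarith [pow_pos hσ 2]
  intro lam hlam
  have hquad : lam ^ 2 - β * σ ^ 2 * lam + σ ^ 2 = 0 := by
    rcases hlam with h | h <;> subst h <;> nlinarith
  have hpos : 0 < lam := by
    rcases hlam with h | h <;> subst h <;> nlinarith
  have hne : lam ≠ 0 := ne_of_gt hpos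
  refine ⟨hpos, ?_, ?_⟩
  · intro h
    apply hv
    funext i
    have := congrFun h (Sum.inl i)
    simpa using this
  · subst hM
    have hu : (fun j => -(1 / lam) * (A.mulVec v) j) = (-(1 / lam)) • A.mulVec v := by
      funext j; simp [Pi.smul_apply, smul_eq_mul]
    rw [Matrix.fromBlocks_mulVec]
    funext i
    rcases i with i | j
    · simp only [Sum.elim_inl, Sum.elim_comp_inl, Sum.elim_comp_inr, Pi.add_apply,
        Pi.smul_apply, smul_eq_mul]
      have h1 : (β • (Aᵀ * A)).mulVec v = (β * σ ^ 2) • v := by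
        rw [Matrix.smul_mulVec, heig, smul_smul]
      have h2 : Aᵀ.mulVec (fun j => -(1 / lam) * (A.mulVec v) j)
          = (-(σ ^ 2 / lam)) • v := by
        rw [hu, Matrix.mulVec_smul, Matrix.mulVec_mulVec, heig, smul_smul]
        congr 1
        field_simp
      rw [h1, h2]
      simp only [Pi.smul_apply, smul_eq_mul]
      have : β * σ ^ 2 - σ ^ 2 / lam = lam := by
        field_simp
        nlinarith
      linear_combination (v i) * this
    · simp only [Sum.elim_inr, Sum.elim_comp_inl, Sum.elim_comp_inr, Pi.add_apply,
        Matrix.neg_mulVec, Pi.neg_apply, Matrix.zero_mulVec, Pi.zero_apply, add_zero,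
        Pi.smul_apply, smul_eq_mul]
      field_simp
end

section
/- Let A ∈ ℝ^{m×n} (m ≤ n) have full row rank m, let β > 0, and let M be the primal-dual update matrix of A with parameter β. Then the kernel of M is exactly the set {(v, 0) : v ∈ ℝ^n, Av = 0}; in particular, if M(v, u) = 0 then u = 0 and Av = 0. -/
open Matrix

lemma transpose_mulVec_eq_zero (m n : ℕ) (A : Matrix (Fin m) (Fin n) ℝ)
    (hrank : A.rank = m) (u : Fin m → ℝ) (h : Aᵀ.mulVec u = 0) : u = 0 := by
  have hr : Module.finrank ℝ (LinearMap.range Aᵀ.mulVecLin) = m := by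
    have : Aᵀ.rank = m := by rw [Matrix.rank_transpose]; exact hrank
    exact this
  have h1 := LinearMap.finrank_range_add_finrank_ker Aᵀ.mulVecLin
  rw [Module.finrank_fintype_fun_eq_card, Fintype.card_fin, hr] at h1
  have hker0 : Module.finrank ℝ (LinearMap.ker Aᵀ.mulVecLin) = 0 := by omega
  have hker : LinearMap.ker Aᵀ.mulVecLin = ⊥ := Submodule.finrank_eq_zero.mp hker0
  have hu : u ∈ LinearMap.ker Aᵀ.mulVecLin := h
  rw [hker] at hu
  simpa using hu

/-- The kernel of the primal-dual update matrix
`M = [[β AᵀA, Aᵀ], [−A, 0]]` of a full-row-rank matrix `A` is exactly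
`{(v, 0) : Av = 0}`; in particular `M(v,u) = 0` implies `u = 0` and `Av = 0`. -/
theorem stmt1 (m n : ℕ) (hmn : m ≤ n) (A : Matrix (Fin m) (Fin n) ℝ)
    (hrank : A.rank = m) (β : ℝ) (hβ : 0 < β)
    (M : Matrix (Fin n ⊕ Fin m) (Fin n ⊕ Fin m) ℝ)
    (hM : M = Matrix.fromBlocks (β • (Aᵀ * A)) Aᵀ (-A) 0) :
    (∀ z : Fin n ⊕ Fin m → ℝ,
      M.mulVec z = 0 ↔ ∃ v : Fin n → ℝ, A.mulVec v = 0 ∧ z = Sum.elim v 0) ∧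
    (∀ (v : Fin n → ℝ) (u : Fin m → ℝ),
      M.mulVec (Sum.elim v u) = 0 → u = 0 ∧ A.mulVec v = 0) := by
  subst hM
  -- core computation
  have key : ∀ (v : Fin n → ℝ) (u : Fin m → ℝ),
      (Matrix.fromBlocks (β • (Aᵀ * A)) Aᵀ (-A) 0).mulVec (Sum.elim v u) = 0 →
      u = 0 ∧ A.mulVec v = 0 := by
    intro v u h
    rw [Matrix.fromBlocks_mulVec] at h
    have h1 : (β • (Aᵀ * A)) *ᵥ v + Aᵀ *ᵥ u = 0 := by
      funext i; have := congrFun h (Sum.inl i); simpa using this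
    have h2 : (-A) *ᵥ v + (0 : Matrix (Fin m) (Fin m) ℝ) *ᵥ u = 0 := by
      funext i; have := congrFun h (Sum.inr i); simpa using this
    have hAv : A *ᵥ v = 0 := by
      have h2' : -(A *ᵥ v) = 0 := by
        rw [Matrix.zero_mulVec, add_zero, Matrix.neg_mulVec] at h2
        exact h2
      exact neg_eq_zero.mp h2'
    have hAtu : Aᵀ *ᵥ u = 0 := by
      have hfirst : (β • (Aᵀ * A)) *ᵥ v = 0 := by
        rw [Matrix.smul_mulVec, ← Matrix.mulVec_mulVec, hAv]
        simp
      rw [hfirst, zero_add] at h1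
      exact h1
    exact ⟨transpose_mulVec_eq_zero m n A hrank u hAtu, hAv⟩
  refine ⟨?_, key⟩
  intro z
  constructor
  · intro h
    have hz : z = Sum.elim (z ∘ Sum.inl) (z ∘ Sum.inr) := by
      funext i; cases i <;> rfl
    rw [hz] at h
    obtain ⟨hu, hv⟩ := key _ _ h
    refine ⟨z ∘ Sum.inl, hv, ?_⟩
    funext i
    cases i with
    | inl i => rfl
    | inr i => exact congrFun hu i
  · rintro ⟨v, hv, rfl⟩
    rw [Matrix.fromBlocks_mulVec]
    have hl : (Sum.elim v (0 : Fin m → ℝ)) ∘ Sum.inl = v := rfl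
    have hr : (Sum.elim v (0 : Fin m → ℝ)) ∘ Sum.inr = 0 := rfl
    rw [hl, hr]
    have : (β • (Aᵀ * A)) *ᵥ v = 0 := by
      rw [Matrix.smul_mulVec, ← Matrix.mulVec_mulVec, hv]; simp
    rw [this]
    funext i; cases i <;> simp [Matrix.neg_mulVec, hv]
end

section
/- Let A ∈ ℝ^{m×n} (m ≤ n) have full row rank m with singular values σ₁, …, σ_m > 0, let β > 0 satisfy β·σᵢ > 2 for every i, and let M be the primal-dual update matrix of A with parameter β. Then M is diagonalizable over ℝ: there exist an invertible real matrix X of size (n+m)×(n+m) and a real diagonal matrix D with M = X D X⁻¹, where the diagonal of D consists of the 2m positive numbers (βσᵢ² ± √(β²σᵢ⁴ − 4σᵢ²))/2 for i = 1,…,m (counted with multiplicity) together with n − m zeros. -/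
open Matrix

private lemma multiset_map_sum_split {p q : ℕ} (f : Fin p ⊕ Fin q → ℝ) :
    (Finset.univ.val.map f : Multiset ℝ) =
      Finset.univ.val.map (f ∘ Sum.inl) + Finset.univ.val.map (f ∘ Sum.inr) := by
  rw [← Finset.univ_disjSum_univ, Finset.val_disjSum, Multiset.disjSum,
    Multiset.map_add, Multiset.map_map, Multiset.map_map]

private lemma sum_smul_dot {ι κ : Type*} [Fintype ι] [Fintype κ]
    (t : ι → ℝ) (f : ι → κ → ℝ) (g : κ → ℝ) :
    (∑ i, t i • f i) ⬝ᵥ g = ∑ i, t i * (f i ⬝ᵥ g) := by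
  simp only [dotProduct, Finset.sum_apply, Pi.smul_apply, smul_eq_mul,
    Finset.sum_mul, Finset.mul_sum]
  rw [Finset.sum_comm]
  simp [mul_assoc]

set_option maxHeartbeats 3000000 in
/-- If the singular values `σ₁, …, σ_m > 0` of the full-row-rank matrix `A`
(encoded by an orthonormal family of eigenvectors of `AᵀA` with eigenvalues `σᵢ²`) satisfy
`β σᵢ > 2`, then the primal-dual update matrix `M = [[β AᵀA, Aᵀ], [−A, 0]]` is diagonalizable
over ℝ, with diagonal consisting (with multiplicity) of the `2m` positive numbers
`(βσᵢ² ± √(β²σᵢ⁴ − 4σᵢ²))/2` together with `n − m` zeros. -/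
theorem stmt2 (m n : ℕ) (hmn : m ≤ n) (A : Matrix (Fin m) (Fin n) ℝ)
    (hrank : A.rank = m) (β : ℝ) (hβ : 0 < β)
    (σ : Fin m → ℝ) (hσpos : ∀ i, 0 < σ i)
    (v : Fin m → (Fin n → ℝ))
    (horth : ∀ i j, v i ⬝ᵥ v j = if i = j then (1 : ℝ) else 0)
    (heig : ∀ i, (Aᵀ * A).mulVec (v i) = (σ i ^ 2) • v i)
    (hβσ : ∀ i, 2 < β * σ i)
    (M : Matrix (Fin n ⊕ Fin m) (Fin n ⊕ Fin m) ℝ)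
    (hM : M = Matrix.fromBlocks (β • (Aᵀ * A)) Aᵀ (-A) 0) :
    ∃ (X : Matrix (Fin n ⊕ Fin m) (Fin n ⊕ Fin m) ℝ) (d : Fin n ⊕ Fin m → ℝ),
      IsUnit X.det ∧
      M = X * Matrix.diagonal d * X⁻¹ ∧
      (Finset.univ.val.map d =
        (Finset.univ.val.map (fun i : Fin m =>
          (β * σ i ^ 2 + Real.sqrt (β ^ 2 * σ i ^ 4 - 4 * σ i ^ 2)) / 2)) +
        (Finset.univ.val.map (fun i : Fin m =>
          (β * σ i ^ 2 - Real.sqrt (β ^ 2 * σ i ^ 4 - 4 * σ i ^ 2)) / 2)) +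
        Multiset.replicate (n - m) (0 : ℝ)) ∧
      (∀ i : Fin m, 0 < (β * σ i ^ 2 + Real.sqrt (β ^ 2 * σ i ^ 4 - 4 * σ i ^ 2)) / 2) ∧
      (∀ i : Fin m, 0 < (β * σ i ^ 2 - Real.sqrt (β ^ 2 * σ i ^ 4 - 4 * σ i ^ 2)) / 2) := by
  classical
  set lp : Fin m → ℝ := fun i : Fin m =>
    (β * σ i ^ 2 + Real.sqrt (β ^ 2 * σ i ^ 4 - 4 * σ i ^ 2)) / 2 with hlp
  set lm : Fin m → ℝ := fun i : Fin m =>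
    (β * σ i ^ 2 - Real.sqrt (β ^ 2 * σ i ^ 4 - 4 * σ i ^ 2)) / 2 with hlm
  -- numeric facts
  have hdisc : ∀ i, 0 < β ^ 2 * σ i ^ 4 - 4 * σ i ^ 2 := by
    intro i
    have h4 : 4 < (β * σ i) ^ 2 := by nlinarith [hβσ i]
    have h5 := mul_pos (pow_pos (hσpos i) 2) (sub_pos.2 h4)
    nlinarith [h5]
  have hsnn : ∀ i, 0 ≤ Real.sqrt (β ^ 2 * σ i ^ 4 - 4 * σ i ^ 2) :=
    fun i => Real.sqrt_nonneg _
  have hspos : ∀ i, 0 < Real.sqrt (β ^ 2 * σ i ^ 4 - 4 * σ i ^ 2) :=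
    fun i => Real.sqrt_pos.2 (hdisc i)
  have hs2 : ∀ i, (Real.sqrt (β ^ 2 * σ i ^ 4 - 4 * σ i ^ 2)) ^ 2
      = β ^ 2 * σ i ^ 4 - 4 * σ i ^ 2 := fun i => Real.sq_sqrt (hdisc i).le
  have hslt : ∀ i, Real.sqrt (β ^ 2 * σ i ^ 4 - 4 * σ i ^ 2) < β * σ i ^ 2 := by
    intro i
    have h1 : 0 < β * σ i ^ 2 := mul_pos hβ (pow_pos (hσpos i) 2)
    nlinarith [hs2 i, hsnn i, pow_pos (hσpos i) 2]
  have hlp_pos : ∀ i, 0 < lp i := by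
    intro i; rw [hlp]; dsimp only
    have h1 := hsnn i
    have h2 : 0 < β * σ i ^ 2 := mul_pos hβ (pow_pos (hσpos i) 2)
    linarith
  have hlm_pos : ∀ i, 0 < lm i := by
    intro i; rw [hlm]; dsimp only
    have := hslt i; linarith
  have hlmlp : ∀ i, lm i < lp i := by
    intro i; rw [hlp, hlm]; dsimp only
    have := hspos i; linarith
  have hquadp : ∀ i, lp i * lp i = β * σ i ^ 2 * lp i - σ i ^ 2 := by
    intro i; rw [hlp]; dsimp only; linear_combination (hs2 i) / 4
  have hquadm : ∀ i, lm i * lm i = β * σ i ^ 2 * lm i - σ i ^ 2 := by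
    intro i; rw [hlm]; dsimp only; linear_combination (hs2 i) / 4
  -- kernel of A
  have hkerdim : Module.finrank ℝ (LinearMap.ker A.mulVecLin) = n - m := by
    have h1 := LinearMap.finrank_range_add_finrank_ker A.mulVecLin
    rw [Module.finrank_fin_fun] at h1
    have h2 : Module.finrank ℝ (LinearMap.range A.mulVecLin) = m := hrank
    omega
  set bk : Module.Basis (Fin (n - m)) ℝ (LinearMap.ker A.mulVecLin) :=
    Module.finBasisOfFinrankEq ℝ _ hkerdim with hbk
  set u : Fin (n - m) → (Fin n → ℝ) := fun k => ((bk k : Fin n → ℝ)) with hu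
  have hAu : ∀ k, A.mulVec (u k) = 0 := by
    intro k
    have h1 : A.mulVecLin ((bk k : Fin n → ℝ)) = 0 := LinearMap.mem_ker.mp (bk k).2
    rw [hu]; dsimp only
    rw [← Matrix.mulVecLin_apply]
    exact h1
  set w : Fin m → (Fin m → ℝ) := fun i => A.mulVec (v i) with hw
  have hwv : ∀ i, A.mulVec (v i) = w i := fun i => rfl
  have hAtw : ∀ i, Aᵀ.mulVec (w i) = (σ i ^ 2) • v i := by
    intro i
    rw [hw]; dsimp only
    rw [Matrix.mulVec_mulVec, heig i]
  have hww : ∀ i j, w i ⬝ᵥ w j = if i = j then σ j ^ 2 else 0 := by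
    intro i j
    have h1 : v i ⬝ᵥ ((Aᵀ * A) *ᵥ v j) = w i ⬝ᵥ w j := by
      rw [← Matrix.mulVec_mulVec, Matrix.dotProduct_mulVec, Matrix.vecMul_transpose, hwv]
    rw [← h1, heig j, dotProduct_smul, horth i j]
    by_cases h : i = j <;> simp [h]
  have huv : ∀ k j, u k ⬝ᵥ v j = 0 := by
    intro k j
    have h1 : u k ⬝ᵥ ((σ j ^ 2) • v j) = 0 := by
      rw [← heig j, ← Matrix.mulVec_mulVec, Matrix.dotProduct_mulVec,
        Matrix.vecMul_transpose, hAu k, zero_dotProduct]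
    rw [dotProduct_smul, smul_eq_mul] at h1
    have hσ2 : (σ j ^ 2) ≠ 0 := (pow_pos (hσpos j) 2).ne'
    exact (mul_eq_zero.mp h1).resolve_left hσ2
  have hvu : ∀ j k, v j ⬝ᵥ u k = 0 := by
    intro j k; rw [dotProduct_comm]; exact huv k j
  -- the equivalence splitting `Fin n`
  have hmn' : m + (n - m) = n := by omega
  set e : Fin n ≃ Fin m ⊕ Fin (n - m) := (finSumFinEquiv.trans (finCongr hmn')).symm with he
  -- columns
  set colm : Fin m → (Fin n ⊕ Fin m → ℝ) :=
    fun i => Sum.elim ((lm i) • v i) (-(w i)) with hcolm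
  set colp : Fin m → (Fin n ⊕ Fin m → ℝ) :=
    fun i => Sum.elim ((lp i) • v i) (-(w i)) with hcolp
  set colk : Fin (n - m) → (Fin n ⊕ Fin m → ℝ) :=
    fun k => Sum.elim (u k) 0 with hcolk
  set col : Fin n ⊕ Fin m → (Fin n ⊕ Fin m → ℝ) :=
    Sum.elim (fun j => Sum.elim colm colk (e j)) colp with hcol
  set d : Fin n ⊕ Fin m → ℝ :=
    Sum.elim (fun j => Sum.elim lm (fun _ => 0) (e j)) lp with hd
  set X : Matrix (Fin n ⊕ Fin m) (Fin n ⊕ Fin m) ℝ :=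
    Matrix.of (fun r c => col c r) with hX
  -- eigenvector equations
  have hE : ∀ (i : Fin m) (lam : ℝ), lam * lam = β * σ i ^ 2 * lam - σ i ^ 2 →
      M.mulVec (Sum.elim (lam • v i) (-(w i))) = lam • Sum.elim (lam • v i) (-(w i)) := by
    intro i lam hq
    rw [hM, Matrix.fromBlocks_mulVec]
    simp only [Sum.elim_comp_inl, Sum.elim_comp_inr]
    have htop : (β • (Aᵀ * A)) *ᵥ (lam • v i) + Aᵀ *ᵥ (-(w i)) = (lam * lam) • v i := by
      rw [Matrix.smul_mulVec, Matrix.mulVec_smul, heig i, Matrix.mulVec_neg,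
        hAtw i, smul_smul, smul_smul, ← sub_eq_add_neg, ← sub_smul]
      congr 1
      rw [hq]; ring
    have hbot : (-A) *ᵥ (lam • v i) + (0 : Matrix (Fin m) (Fin m) ℝ) *ᵥ (-(w i))
        = lam • (-(w i)) := by
      rw [Matrix.zero_mulVec, add_zero, Matrix.neg_mulVec, Matrix.mulVec_smul, hwv,
        ← smul_neg]
    rw [htop, hbot]
    funext r
    cases r with
    | inl r =>
      simp only [Sum.elim_inl, Pi.smul_apply, smul_eq_mul]
      ring
    | inr r =>
      simp only [Sum.elim_inr, Pi.smul_apply, Pi.neg_apply, smul_eq_mul]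
  have hEk : ∀ k, M.mulVec (colk k) = 0 := by
    intro k
    show M.mulVec (Sum.elim (u k) 0) = 0
    rw [hM, Matrix.fromBlocks_mulVec]
    simp only [Sum.elim_comp_inl, Sum.elim_comp_inr]
    have h1 : (β • (Aᵀ * A)) *ᵥ u k = 0 := by
      rw [Matrix.smul_mulVec, ← Matrix.mulVec_mulVec, hAu k,
        Matrix.mulVec_zero, smul_zero]
    have h2 : (-A) *ᵥ u k = 0 := by
      rw [Matrix.neg_mulVec, hAu k, neg_zero]
    rw [h1, h2, Matrix.mulVec_zero, Matrix.zero_mulVec, add_zero, add_zero]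
    funext r; cases r <;> simp
  have key : ∀ c, M.mulVec (col c) = d c • col c := by
    rintro (j | i)
    · show M.mulVec (Sum.elim colm colk (e j))
        = (Sum.elim lm (fun _ => (0:ℝ)) (e j)) • Sum.elim colm colk (e j)
      cases hej : e j with
      | inl i => exact hE i (lm i) (hquadm i)
      | inr k =>
        show M.mulVec (colk k) = (0:ℝ) • colk k
        rw [zero_smul]; exact hEk k
    · exact hE i (lp i) (hquadp i)
  -- M * X = X * diagonal d
  have hMX : M * X = X * Matrix.diagonal d := by
    ext r c
    rw [Matrix.mul_apply, Matrix.mul_diagonal]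
    have h := congrFun (key c) r
    simp only [Matrix.mulVec, dotProduct, Pi.smul_apply, smul_eq_mul] at h
    calc ∑ k, M r k * X k c = ∑ k, M r k * col c k := by
          apply Finset.sum_congr rfl; intro k _; rw [hX]; rfl
      _ = d c * col c r := h
      _ = X r c * d c := by rw [hX]; dsimp only [Matrix.of_apply]; ring
  -- injectivity
  have hker0 : ∀ c, X.mulVec c = 0 → c = 0 := by
    intro c hc
    have hsum : ∑ t : Fin n ⊕ Fin m, c t • col t = 0 := by
      funext r
      have h := congrFun hc r
      simp only [Matrix.mulVec, dotProduct, hX, Matrix.of_apply, Pi.zero_apply] at h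
      simp only [Finset.sum_apply, Pi.smul_apply, smul_eq_mul, Pi.zero_apply]
      rw [← h]
      apply Finset.sum_congr rfl; intro t _; ring
    set a : Fin m → ℝ := fun i => c (Sum.inl (e.symm (Sum.inl i))) with ha
    set ec : Fin (n - m) → ℝ := fun k => c (Sum.inl (e.symm (Sum.inr k))) with hec
    set b : Fin m → ℝ := fun i => c (Sum.inr i) with hb
    have hsplit : ((∑ i, a i • colm i) + ∑ k, ec k • colk k) + ∑ i, b i • colp i = 0 := by
      rw [← hsum, Fintype.sum_sum_type]
      congr 1
      · rw [← Equiv.sum_comp e.symm (fun j => c (Sum.inl j) • col (Sum.inl j)),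
          Fintype.sum_sum_type]
        congr 1
        · apply Finset.sum_congr rfl; intro i _
          simp only [ha, hcol, Sum.elim_inl, Equiv.apply_symm_apply]
        · apply Finset.sum_congr rfl; intro k _
          simp only [hec, hcol, Sum.elim_inl, Sum.elim_inr, Equiv.apply_symm_apply]
    have htopv : (∑ i, (a i * lm i + b i * lp i) • v i) + ∑ k, ec k • u k
        = (0 : Fin n → ℝ) := by
      funext r
      have h := congrFun hsplit (Sum.inl r)
      simp only [Finset.sum_apply, Pi.add_apply, Pi.smul_apply, Pi.zero_apply,
        smul_eq_mul, hcolm, hcolp, hcolk, Sum.elim_inl] at h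
      simp only [Finset.sum_apply, Pi.add_apply, Pi.smul_apply, Pi.zero_apply, smul_eq_mul]
      have e1 : ∑ i, (a i * lm i + b i * lp i) * v i r
          = (∑ i, a i * (lm i * v i r)) + ∑ i, b i * (lp i * v i r) := by
        rw [← Finset.sum_add_distrib]
        apply Finset.sum_congr rfl; intros; ring
      rw [e1]; linarith [h]
    have hbotv : ∑ i, (a i + b i) • w i = (0 : Fin m → ℝ) := by
      funext r
      have h := congrFun hsplit (Sum.inr r)
      simp only [Finset.sum_apply, Pi.add_apply, Pi.smul_apply, Pi.zero_apply,
        smul_eq_mul, hcolm, hcolp, hcolk, Sum.elim_inr, Pi.neg_apply, mul_zero,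
        Finset.sum_const_zero, add_zero] at h
      simp only [Finset.sum_apply, Pi.smul_apply, Pi.zero_apply, smul_eq_mul]
      have e1 : (∑ i, (a i + b i) * w i r)
          + ((∑ i, a i * (-(w i r))) + ∑ i, b i * (-(w i r))) = 0 := by
        rw [← Finset.sum_add_distrib, ← Finset.sum_add_distrib]
        exact Finset.sum_eq_zero fun i _ => by ring
      linarith [h, e1]
    have hab : ∀ j, a j = 0 ∧ b j = 0 := by
      intro j
      have h1 : a j * lm j + b j * lp j = 0 := by
        have hdot := congrArg (fun z => z ⬝ᵥ v j) htopv
        simp only [add_dotProduct, sum_smul_dot, zero_dotProduct] at hdot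
        rw [Finset.sum_eq_single j (fun i _ hij => by rw [horth i j, if_neg hij]; ring)
          (by intro h; exact absurd (Finset.mem_univ j) h)] at hdot
        have h2 : ∑ k, ec k * (u k ⬝ᵥ v j) = 0 := by
          apply Finset.sum_eq_zero; intro k _; rw [huv k j]; ring
        rw [horth j j, if_pos rfl, h2] at hdot
        simpa using hdot
      have h2 : a j + b j = 0 := by
        have hdot := congrArg (fun z => z ⬝ᵥ w j) hbotv
        simp only [sum_smul_dot, zero_dotProduct] at hdot
        rw [Finset.sum_eq_single j (fun i _ hij => by rw [hww i j, if_neg hij]; ring)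
          (by intro h; exact absurd (Finset.mem_univ j) h)] at hdot
        rw [hww j j, if_pos rfl] at hdot
        have hσ2 : (0:ℝ) < σ j ^ 2 := pow_pos (hσpos j) 2
        have : (a j + b j) * σ j ^ 2 = 0 := hdot
        exact (mul_eq_zero.mp this).resolve_right hσ2.ne'
      have hne : lm j ≠ lp j := (hlmlp j).ne
      constructor
      · by_contra haj
        have : a j * (lm j - lp j) = 0 := by
          have : b j = -a j := by linarith
          rw [this] at h1; linarith [h1]
        rcases mul_eq_zero.mp this with h | h
        · exact haj h
        · exact hne (by linarith)
      · by_contra hbj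
        have : b j * (lp j - lm j) = 0 := by
          have : a j = -b j := by linarith
          rw [this] at h1; linarith [h1]
        rcases mul_eq_zero.mp this with h | h
        · exact hbj h
        · exact hne (by linarith)
    have hecz : ∀ k, ec k = 0 := by
      have hz : ∑ i, (a i * lm i + b i * lp i) • v i = (0 : Fin n → ℝ) := by
        apply Finset.sum_eq_zero; intro i _
        rw [(hab i).1, (hab i).2]; simp
      have hsum0 : ∑ k, ec k • u k = (0 : Fin n → ℝ) := by
        have h := htopv
        rw [hz, zero_add] at h
        exact h
      have hindep : LinearIndependent ℝ u :=
        bk.linearIndependent.map' (Submodule.subtype _) (Submodule.ker_subtype _)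
      exact Fintype.linearIndependent_iff.mp hindep ec hsum0
    funext t
    cases t with
    | inl j =>
      cases hej : e j with
      | inl i =>
        have hj : j = e.symm (Sum.inl i) := by rw [← hej, Equiv.symm_apply_apply]
        show c (Sum.inl j) = 0
        rw [hj]; exact (hab i).1
      | inr k =>
        have hj : j = e.symm (Sum.inr k) := by rw [← hej, Equiv.symm_apply_apply]
        show c (Sum.inl j) = 0
        rw [hj]; exact hecz k
    | inr i =>
      show c (Sum.inr i) = 0
      exact (hab i).2
  have hXinj : Function.Injective X.mulVec := by
    intro x y hxy
    have h := hker0 (x - y) (by rw [Matrix.mulVec_sub, hxy, sub_self])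
    exact sub_eq_zero.mp h
  have hdet : IsUnit X.det := by
    rw [← Matrix.isUnit_iff_isUnit_det]
    exact Matrix.mulVec_injective_iff_isUnit.mp hXinj
  -- multiset of eigenvalues
  have hmul : Finset.univ.val.map d
      = Finset.univ.val.map lp + Finset.univ.val.map lm
        + Multiset.replicate (n - m) (0 : ℝ) := by
    rw [multiset_map_sum_split d]
    have h1 : (Finset.univ.val.map (d ∘ Sum.inl) : Multiset ℝ)
        = Finset.univ.val.map lm + Multiset.replicate (n - m) 0 := by
      have h2 : d ∘ Sum.inl = (Sum.elim lm (fun _ : Fin (n - m) => (0:ℝ))) ∘ e := rfl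
      rw [h2, ← Multiset.map_map, Multiset.map_univ_val_equiv,
        multiset_map_sum_split (Sum.elim lm (fun _ : Fin (n - m) => (0:ℝ)))]
      congr 1
      show (Finset.univ.val.map ((Sum.elim lm (fun _ : Fin (n - m) => (0:ℝ))) ∘ Sum.inr))
          = Multiset.replicate (n - m) 0
      have h3 : (Sum.elim lm (fun _ : Fin (n - m) => (0:ℝ))) ∘ Sum.inr
          = fun _ : Fin (n - m) => (0:ℝ) := rfl
      rw [h3]
      simp [Multiset.map_const']
    have h2 : d ∘ Sum.inr = lp := rfl
    rw [h1, h2, add_comm (_ + _) (Multiset.map lp _), ← add_assoc]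
  -- conclusion
  refine ⟨X, d, hdet, ?_, hmul, hlp_pos, hlm_pos⟩
  have hinv : X * X⁻¹ = 1 := Matrix.mul_nonsing_inv X hdet
  calc M = M * (X * X⁻¹) := by rw [hinv, mul_one]
    _ = (M * X) * X⁻¹ := by rw [Matrix.mul_assoc]
    _ = X * Matrix.diagonal d * X⁻¹ := by rw [hMX]
end

section
/- Let A ∈ ℝ^{m×n} (m ≤ n) have full row rank m with singular values σ₁, …, σ_m > 0, let β > 0, and let M be the primal-dual update matrix of A with parameter β. Then there exists an orthogonal matrix Q ∈ ℝ^{(n+m)×(n+m)} such that QᵀMQ is the block-diagonal matrix whose diagonal blocks are B(σ₁), …, B(σ_m) followed by the zero block of size (n−m)×(n−m), i.e., M = Q Λ Qᵀ with Λ = blockdiag(B(σ₁), …, B(σ_m), 0_{(n−m)×(n−m)}). -/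
open Matrix

section aux

variable {m n : ℕ}

private lemma symdot (A : Matrix (Fin m) (Fin n) ℝ) (y x : Fin n → ℝ) :
    (Aᵀ * A).mulVec y ⬝ᵥ x = A.mulVec y ⬝ᵥ A.mulVec x := by
  rw [← mulVec_mulVec, mulVec_transpose, ← dotProduct_mulVec]

/-- Any vector orthogonal to the `m` orthonormal eigenvectors (with nonzero eigenvalues)
of `AᵀA` lies in the kernel of `A`, when `A` has rank `m`. -/
private lemma aux_ker (hmn : m ≤ n) (A : Matrix (Fin m) (Fin n) ℝ) (hrank : A.rank = m)
    (σ : Fin m → ℝ) (hσ : ∀ i, σ i ≠ 0)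
    (v : Fin m → Fin n → ℝ)
    (horth : ∀ i j, v i ⬝ᵥ v j = if i = j then (1 : ℝ) else 0)
    (heig : ∀ i, (Aᵀ * A).mulVec (v i) = (σ i ^ 2) • v i)
    (x : Fin n → ℝ) (hx : ∀ i, v i ⬝ᵥ x = 0) : A.mulVec x = 0 := by
  classical
  set toL := WithLp.linearEquiv 2 ℝ (Fin n → ℝ) with htoL
  set f : EuclideanSpace ℝ (Fin n) →ₗ[ℝ] (Fin m → ℝ) :=
    A.mulVecLin ∘ₗ toL.toLinearMap with hf
  set vE : Fin m → EuclideanSpace ℝ (Fin n) := fun i => toL.symm (v i) with hvE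
  have htoLvE : ∀ i, toL (vE i) = v i := fun i => toL.apply_symm_apply _
  have hinner : ∀ x y : EuclideanSpace ℝ (Fin n),
      inner ℝ x y = (toL x) ⬝ᵥ (toL y) := by
    intro x y
    simp [PiLp.inner_apply, dotProduct, RCLike.inner_apply, mul_comm, htoL,
      WithLp.linearEquiv_apply]
  have hvE_on : Orthonormal ℝ vE := by
    rw [orthonormal_iff_ite]
    intro i j
    rw [hinner, htoLvE, htoLvE]
    exact horth i j
  set K : Submodule ℝ (EuclideanSpace ℝ (Fin n)) := Submodule.span ℝ (Set.range vE) with hK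
  -- the kernel of f is contained in Kᗮ
  have hle : LinearMap.ker f ≤ Kᗮ := by
    intro y hy
    have hAy : A.mulVec (toL y) = 0 := by
      simpa [hf, Matrix.mulVecLin] using hy
    rw [Submodule.mem_orthogonal]
    intro z hz
    induction hz using Submodule.span_induction with
    | mem z hz =>
        obtain ⟨i, rfl⟩ := hz
        rw [hinner, htoLvE]
        have h1 : (σ i ^ 2) * (v i ⬝ᵥ toL y) = 0 := by
          have : ((σ i ^ 2) • v i) ⬝ᵥ toL y = 0 := by
            rw [← heig i, symdot, hAy, dotProduct_zero]
          simpa [smul_dotProduct, smul_eq_mul] using this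
        have hs : σ i ^ 2 ≠ 0 := pow_ne_zero _ (hσ i)
        exact (mul_eq_zero.mp h1).resolve_left hs
    | zero => simp
    | add y₁ y₂ _ _ h1 h2 => rw [inner_add_left, h1, h2, add_zero]
    | smul c y₁ _ h1 => rw [inner_smul_left, h1, mul_zero]
  -- dimension count
  have hfr : Module.finrank ℝ (EuclideanSpace ℝ (Fin n)) = n := by simp
  have hrange : LinearMap.range f = LinearMap.range A.mulVecLin := by
    rw [hf, LinearMap.range_comp, LinearEquiv.range, Submodule.map_top]
  have hrankf : Module.finrank ℝ (LinearMap.range f) = m := by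
    rw [hrange]; exact hrank
  have hkerf : Module.finrank ℝ (LinearMap.ker f) = n - m := by
    have := LinearMap.finrank_range_add_finrank_ker f
    rw [hfr, hrankf] at this
    omega
  have hKfin : Module.finrank ℝ K = m := by
    rw [hK, finrank_span_eq_card hvE_on.linearIndependent]
    simp
  have hKorth : Module.finrank ℝ Kᗮ = n - m := by
    have := Submodule.finrank_add_finrank_orthogonal K
    rw [hfr, hKfin] at this
    omega
  have heq : LinearMap.ker f = Kᗮ :=
    Submodule.eq_of_le_of_finrank_eq hle (by rw [hkerf, hKorth])
  -- x is orthogonal to all vE, hence in Kᗮ = ker f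
  have hxK : toL.symm x ∈ Kᗮ := by
    rw [Submodule.mem_orthogonal]
    intro z hz
    induction hz using Submodule.span_induction with
    | mem z hz =>
        obtain ⟨i, rfl⟩ := hz
        rw [hinner, htoLvE, toL.apply_symm_apply]
        exact hx i
    | zero => simp
    | add y₁ y₂ _ _ h1 h2 => rw [inner_add_left, h1, h2, add_zero]
    | smul c y₁ _ h1 => rw [inner_smul_left, h1, mul_zero]
  rw [← heq, LinearMap.mem_ker, hf] at hxK
  simpa [Matrix.mulVecLin] using hxK

/-- Extension of an orthonormal family of `m` vectors in `ℝⁿ` to `n - m` further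
orthonormal vectors. -/
private lemma exists_w (hmn : m ≤ n) (v : Fin m → Fin n → ℝ)
    (horth : ∀ i j, v i ⬝ᵥ v j = if i = j then (1 : ℝ) else 0) :
    ∃ w : Fin (n - m) → Fin n → ℝ,
      (∀ j j', w j ⬝ᵥ w j' = if j = j' then (1 : ℝ) else 0) ∧
      (∀ i j, v i ⬝ᵥ w j = 0) := by
  classical
  set toL := WithLp.linearEquiv 2 ℝ (Fin n → ℝ) with htoL
  set vE : Fin m → EuclideanSpace ℝ (Fin n) := fun i => toL.symm (v i) with hvE
  have htoLvE : ∀ i, toL (vE i) = v i := fun i => toL.apply_symm_apply _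
  have hinner : ∀ x y : EuclideanSpace ℝ (Fin n),
      inner ℝ x y = (toL x) ⬝ᵥ (toL y) := by
    intro x y
    simp [PiLp.inner_apply, dotProduct, RCLike.inner_apply, mul_comm, htoL,
      WithLp.linearEquiv_apply]
  set v'' : Fin n → EuclideanSpace ℝ (Fin n) :=
    fun k => if h : (k : ℕ) < m then vE ⟨k, h⟩ else 0 with hv''
  set s : Set (Fin n) := {k | (k : ℕ) < m} with hs
  have hres : Orthonormal ℝ (s.restrict v'') := by
    rw [orthonormal_iff_ite]
    rintro ⟨k, hk⟩ ⟨k', hk'⟩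
    have hk1 : (k : ℕ) < m := hk
    have hk2 : (k' : ℕ) < m := hk'
    simp only [Set.restrict, Set.domRestrict_apply, hv'', dif_pos hk1, dif_pos hk2]
    rw [hinner, htoLvE, htoLvE, horth]
    congr 1
    simp only [eq_iff_iff]
    constructor
    · rintro h; rw [Fin.mk_eq_mk] at h; exact Subtype.ext (Fin.ext h)
    · rintro h; rw [Subtype.mk_eq_mk] at h; exact Fin.ext (by simpa using congrArg Fin.val h)
  have hcard : Module.finrank ℝ (EuclideanSpace ℝ (Fin n)) = Fintype.card (Fin n) := by simp
  obtain ⟨b, hb⟩ := hres.exists_orthonormalBasis_extension_of_card_eq hcard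
  have hbo := orthonormal_iff_ite.mp b.orthonormal
  set e1 : Fin m → Fin n := fun i => ⟨i, lt_of_lt_of_le i.2 hmn⟩ with he1
  set e2 : Fin (n - m) → Fin n := fun j => ⟨m + j, by have := j.2; omega⟩ with he2
  have hbv : ∀ i, b (e1 i) = vE i := by
    intro i
    have h1 : e1 i ∈ s := by simpa [he1, hs] using i.2
    rw [hb _ h1]
    simp [hv'', he1, i.2]
  refine ⟨fun j => toL (b (e2 j)), ?_, ?_⟩
  · intro j j'
    have := hbo (e2 j) (e2 j')
    rw [hinner] at this
    rw [this]
    congr 1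
    simp only [eq_iff_iff, he2, Fin.mk_eq_mk]
    constructor
    · intro h; exact Fin.ext (by omega)
    · intro h; rw [h]
  · intro i j
    have := hbo (e1 i) (e2 j)
    rw [hinner, hbv, htoLvE] at this
    rw [this, if_neg]
    intro h
    have : (e1 i : ℕ) = (e2 j : ℕ) := congrArg Fin.val h
    simp only [he1, he2] at this
    have := i.2
    omega

end aux

/-- The primal-dual update matrix `M = [[β AᵀA, Aᵀ], [−A, 0]]` of a
full-row-rank matrix `A` with singular values `σ₁, …, σ_m > 0` (encoded by an orthonormal
family of eigenvectors of `AᵀA` with eigenvalues `σᵢ²`) is orthogonally block-diagonalizable: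
`M = Q Λ Qᵀ` where `Q` is orthogonal and `Λ = blockdiag(B(σ₁), …, B(σ_m), 0_{(n−m)×(n−m)})`
with `B(σ) = [[βσ², σ], [−σ, 0]]`. -/
theorem stmt3 (m n : ℕ) (hmn : m ≤ n) (A : Matrix (Fin m) (Fin n) ℝ)
    (hrank : A.rank = m) (β : ℝ) (hβ : 0 < β)
    (σ : Fin m → ℝ) (hσpos : ∀ i, 0 < σ i)
    (v : Fin m → (Fin n → ℝ))
    (horth : ∀ i j, v i ⬝ᵥ v j = if i = j then (1 : ℝ) else 0)
    (heig : ∀ i, (Aᵀ * A).mulVec (v i) = (σ i ^ 2) • v i)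
    (M : Matrix (Fin n ⊕ Fin m) (Fin n ⊕ Fin m) ℝ)
    (hM : M = Matrix.fromBlocks (β • (Aᵀ * A)) Aᵀ (-A) 0)
    (B : ℝ → Matrix (Fin 2) (Fin 2) ℝ)
    (hB : ∀ s : ℝ, B s = !![β * s ^ 2, s; -s, 0]) :
    ∃ Q : Matrix (Fin n ⊕ Fin m) ((Fin 2 × Fin m) ⊕ Fin (n - m)) ℝ,
      Qᵀ * Q = 1 ∧ Q * Qᵀ = 1 ∧
      M = Q * (Matrix.fromBlocks
                (Matrix.blockDiagonal (fun i : Fin m => B (σ i))) 0 0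
                (0 : Matrix (Fin (n - m)) (Fin (n - m)) ℝ)) * Qᵀ := by
  classical
  have hσne : ∀ i, σ i ≠ 0 := fun i => (hσpos i).ne'
  obtain ⟨w, hww, hvw⟩ := exists_w hmn v horth
  have hAw : ∀ j, A.mulVec (w j) = 0 := fun j =>
    aux_ker hmn A hrank σ hσne v horth heig (w j) (fun i => hvw i j)
  have hATAw : ∀ j, (Aᵀ * A).mulVec (w j) = 0 := by
    intro j
    rw [← mulVec_mulVec, hAw, mulVec_zero]
  set u : Fin m → Fin m → ℝ := fun i => (σ i)⁻¹ • A.mulVec (v i) with hu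
  have hAv : ∀ i, A.mulVec (v i) = σ i • u i := by
    intro i
    rw [hu]
    simp [smul_smul, mul_inv_cancel₀ (hσne i)]
  have hATu : ∀ i, Aᵀ.mulVec (u i) = σ i • v i := by
    intro i
    rw [hu]
    simp only [Matrix.mulVec_smul, mulVec_mulVec, heig i, smul_smul]
    rw [pow_two, ← mul_assoc, inv_mul_cancel₀ (hσne i), one_mul]
  have hAvAv : ∀ i j, A.mulVec (v i) ⬝ᵥ A.mulVec (v j) = σ i ^ 2 * (v i ⬝ᵥ v j) := by
    intro i j
    rw [← symdot, heig i, smul_dotProduct, smul_eq_mul]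
  have huu : ∀ i j, u i ⬝ᵥ u j = if i = j then (1 : ℝ) else 0 := by
    intro i j
    rw [hu]
    simp only [smul_dotProduct, dotProduct_smul, smul_eq_mul]
    rw [hAvAv, horth]
    rcases eq_or_ne i j with rfl | hij
    · rw [if_pos rfl]
      field_simp
      exact div_self (hσne i)
    · rw [if_neg hij]
      ring
  -- sum forms
  have horthS : ∀ i j, (∑ k, v i k * v j k) = if i = j then (1 : ℝ) else 0 := horth
  have huuS : ∀ i j, (∑ k, u i k * u j k) = if i = j then (1 : ℝ) else 0 := huu
  have hvwS : ∀ i j, (∑ k, v i k * w j k) = 0 := hvw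
  have hwwS : ∀ j j', (∑ k, w j k * w j' k) = if j = j' then (1 : ℝ) else 0 := hww
  have hATAvS : ∀ i k, (∑ k', (Aᵀ * A) k k' * v i k') = σ i ^ 2 * v i k := by
    intro i k
    have := congrFun (heig i) k
    simpa [Matrix.mulVec, dotProduct] using this
  have hATuS : ∀ i k, (∑ k', Aᵀ k k' * u i k') = σ i * v i k := by
    intro i k
    have := congrFun (hATu i) k
    simpa [Matrix.mulVec, dotProduct] using this
  have hAvS : ∀ i k, (∑ k', A k k' * v i k') = σ i * u i k := by
    intro i k
    have := congrFun (hAv i) k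
    simpa [Matrix.mulVec, dotProduct] using this
  have hAwS : ∀ j k, (∑ k', A k k' * w j k') = 0 := by
    intro j k
    have := congrFun (hAw j) k
    simpa [Matrix.mulVec, dotProduct] using this
  have hATAwS : ∀ j k, (∑ k', (Aᵀ * A) k k' * w j k') = 0 := by
    intro j k
    have := congrFun (hATAw j) k
    simpa [Matrix.mulVec, dotProduct] using this
  have hATAvS' : ∀ i k, (∑ x : Fin n, (∑ t : Fin m, A t k * A t x) * v i x) = σ i ^ 2 * v i k := by
    intro i k
    have := hATAvS i k
    simpa [Matrix.mul_apply, Matrix.transpose_apply] using this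
  have hATAwS' : ∀ j k, (∑ x : Fin n, (∑ t : Fin m, A t k * A t x) * w j x) = 0 := by
    intro j k
    have := hATAwS j k
    simpa [Matrix.mul_apply, Matrix.transpose_apply] using this
  have hATuS' : ∀ i k, (∑ t : Fin m, A t k * u i t) = σ i * v i k := by
    intro i k
    have := hATuS i k
    simpa [Matrix.transpose_apply] using this
  -- the blocks of Q
  set Q₁₁ : Matrix (Fin n) (Fin 2 × Fin m) ℝ :=
    Matrix.of (fun k p => if p.1 = 0 then v p.2 k else 0) with hQ11
  set Q₂₁ : Matrix (Fin m) (Fin 2 × Fin m) ℝ :=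
    Matrix.of (fun k p => if p.1 = 1 then u p.2 k else 0) with hQ21
  set Q₁₂ : Matrix (Fin n) (Fin (n - m)) ℝ := Matrix.of (fun k j => w j k) with hQ12
  set D : Matrix (Fin 2 × Fin m) (Fin 2 × Fin m) ℝ :=
    Matrix.blockDiagonal (fun i : Fin m => B (σ i)) with hD
  set Q : Matrix (Fin n ⊕ Fin m) ((Fin 2 × Fin m) ⊕ Fin (n - m)) ℝ :=
    Matrix.fromBlocks Q₁₁ Q₁₂ Q₂₁ 0 with hQ
  -- entries of B
  have hB00 : ∀ s, B s 0 0 = β * s ^ 2 := fun s => by rw [hB]; simp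
  have hB01 : ∀ s, B s 0 1 = s := fun s => by rw [hB]; simp
  have hB10 : ∀ s, B s 1 0 = -s := fun s => by rw [hB]; simp
  have hB11 : ∀ s, B s 1 1 = 0 := fun s => by rw [hB]; simp
  -- orthonormality blocks
  have hO1 : Q₁₁ᵀ * Q₁₁ + Q₂₁ᵀ * Q₂₁ = 1 := by
    ext p q
    obtain ⟨a, i⟩ := p
    obtain ⟨a', i'⟩ := q
    fin_cases a <;> fin_cases a' <;>
      simp [hQ11, hQ21, Matrix.mul_apply, Matrix.one_apply, Prod.ext_iff,
        horthS, huuS]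
  have hO2 : Q₁₁ᵀ * Q₁₂ = 0 := by
    ext p j
    obtain ⟨a, i⟩ := p
    fin_cases a <;>
      simp [hQ11, hQ12, Matrix.mul_apply, hvwS]
  have hO3 : Q₁₂ᵀ * Q₁₁ = 0 := by
    ext j p
    obtain ⟨a, i⟩ := p
    fin_cases a <;>
      simp [hQ11, hQ12, Matrix.mul_apply, mul_comm, hvwS]
  have hO4 : Q₁₂ᵀ * Q₁₂ = 1 := by
    ext j j'
    simp [hQ12, Matrix.mul_apply, Matrix.one_apply, hwwS]
  have hQtQ : Qᵀ * Q = 1 := by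
    rw [hQ, fromBlocks_transpose, fromBlocks_multiply]
    rw [Matrix.mul_zero, Matrix.transpose_zero, Matrix.zero_mul, Matrix.zero_mul,
      add_zero, add_zero, add_zero]
    rw [hO1, hO2, hO3, hO4, fromBlocks_one]
  have hQQt : Q * Qᵀ = 1 := by
    have e : (Fin n ⊕ Fin m) ≃ ((Fin 2 × Fin m) ⊕ Fin (n - m)) :=
      Fintype.equivOfCardEq (by simp; omega)
    exact (Matrix.mul_eq_one_comm_of_equiv e).mpr hQtQ
  -- the intertwining blocks
  have hA1 : β • (Aᵀ * A) * Q₁₁ + Aᵀ * Q₂₁ = Q₁₁ * D := by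
    ext k p
    obtain ⟨a, i⟩ := p
    have hR : (Q₁₁ * D) k (a, i) = v i k * B (σ i) 0 a := by
      rw [Matrix.mul_apply, Fintype.sum_prod_type]
      simp [hQ11, hD, Matrix.blockDiagonal_apply, mul_ite, Finset.sum_ite_eq,
        Finset.sum_ite_eq']
    rw [hR]
    fin_cases a
    · simp only [Fin.zero_eta, Fin.mk_one, hB00, Matrix.add_apply, Matrix.mul_apply,
        Matrix.smul_apply, smul_eq_mul, hQ11, hQ21, Matrix.of_apply]
      simp only [mul_assoc, ← Finset.mul_sum]
      simp
      rw [hATAvS']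
      ring
    · simp only [Fin.zero_eta, Fin.mk_one, hB01, Matrix.add_apply, Matrix.mul_apply,
        Matrix.smul_apply, smul_eq_mul, hQ11, hQ21, Matrix.of_apply]
      simp
      rw [hATuS']
      ring
  have hA2 : β • (Aᵀ * A) * Q₁₂ = 0 := by
    ext k j
    simp only [Matrix.mul_apply, Matrix.smul_apply, smul_eq_mul, hQ12, Matrix.of_apply,
      Matrix.zero_apply]
    simp only [mul_assoc, ← Finset.mul_sum]
    simp [Matrix.mul_apply]
    exact Or.inr (hATAwS' j k)
  have hA3 : -A * Q₁₁ = Q₂₁ * D := by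
    ext k p
    obtain ⟨a, i⟩ := p
    have hR : (Q₂₁ * D) k (a, i) = u i k * B (σ i) 1 a := by
      rw [Matrix.mul_apply, Fintype.sum_prod_type]
      simp [hQ21, hD, Matrix.blockDiagonal_apply, mul_ite, Finset.sum_ite_eq,
        Finset.sum_ite_eq']
    rw [hR]
    fin_cases a
    · simp only [Fin.zero_eta, Fin.mk_one, hB10, Matrix.mul_apply, Matrix.neg_apply,
        hQ11, Matrix.of_apply]
      simp
      rw [hAvS]
      ring
    · simp only [Fin.zero_eta, Fin.mk_one, hB11, Matrix.mul_apply, Matrix.neg_apply,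
        hQ11, Matrix.of_apply]
      simp
  have hA4 : -A * Q₁₂ = 0 := by
    ext k j
    simp only [Matrix.mul_apply, Matrix.neg_apply, hQ12, Matrix.of_apply, Matrix.zero_apply]
    simp only [neg_mul, Finset.sum_neg_distrib]
    rw [hAwS, neg_zero]
  have hMQ : M * Q = Q * (Matrix.fromBlocks D 0 0
      (0 : Matrix (Fin (n - m)) (Fin (n - m)) ℝ)) := by
    rw [hM, hQ, fromBlocks_multiply, fromBlocks_multiply]
    simp only [Matrix.mul_zero, Matrix.zero_mul, add_zero, zero_add]
    rw [hA1, hA2, hA3, hA4]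
  refine ⟨Q, hQtQ, hQQt, ?_⟩
  calc M = M * (Q * Qᵀ) := by rw [hQQt, Matrix.mul_one]
    _ = (M * Q) * Qᵀ := by rw [Matrix.mul_assoc]
    _ = _ := by rw [hMQ]
end

section
/- Let A ∈ ℝ^{m×n} (m ≤ n) have full row rank m, with all singular values in [μ, L] where 0 < μ ≤ L, let β > 2/μ, and let M be the primal-dual update matrix of A with parameter β. Let λmin and λmax denote the smallest and largest nonzero (real, positive) eigenvalues of M, and set γ = 4/(β²μ² − 4). Then for any T ≥ 1 and any real stepsizes η₁, …, η_T, the matrix Γ = (I − η_T M)(I − η_{T−1} M)⋯(I − η₁ M) satisfies: for every w ∈ ℝ^{n+m} orthogonal to the kernel of M, ‖Γ w‖₂² ≤ (2 + 4γ) · (max over λ ∈ [λmin, λmax] of ∏_{t=1}^T (1 − η_t λ)²) · ‖w‖₂². -/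
open Matrix

lemma sumDotAux {k ι : Type*} [Fintype k] (s : Finset ι) (f : ι → k → ℝ) (y : k → ℝ) :
    (∑ i ∈ s, f i) ⬝ᵥ y = ∑ i ∈ s, f i ⬝ᵥ y := by
  simp only [dotProduct, Finset.sum_apply, Finset.sum_mul]
  exact Finset.sum_comm

lemma dotSumAux {k ι : Type*} [Fintype k] (s : Finset ι) (f : ι → k → ℝ) (y : k → ℝ) :
    y ⬝ᵥ (∑ i ∈ s, f i) = ∑ i ∈ s, y ⬝ᵥ f i := by
  rw [dotProduct_comm, sumDotAux]
  exact Finset.sum_congr rfl fun i _ => dotProduct_comm _ _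

lemma mulVecSumAux {k l ι : Type*} [Fintype k] [Fintype l] (M : Matrix l k ℝ) (s : Finset ι)
    (f : ι → k → ℝ) : M *ᵥ (∑ i ∈ s, f i) = ∑ i ∈ s, M *ᵥ f i :=
  map_sum M.mulVecLin f s

lemma dotSelfNonneg {k : Type*} [Fintype k] (x : k → ℝ) : 0 ≤ x ⬝ᵥ x :=
  Finset.sum_nonneg fun i _ => mul_self_nonneg (x i)


lemma prodMulVecEig {k : Type*} [Fintype k] [DecidableEq k]
    (M : Matrix k k ℝ) (x : k → ℝ) (lam : ℝ) (hx : M.mulVec x = lam • x) :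
    ∀ l : List ℝ, ((l.map (fun c => (1 : Matrix k k ℝ) - c • M)).reverse.prod).mulVec x
      = (l.map (fun c => 1 - c * lam)).prod • x := by
  intro l
  induction l with
  | nil => simp [Matrix.one_mulVec]
  | cons c l ih =>
    simp only [List.map_cons, List.reverse_cons, List.prod_append, List.prod_cons,
      List.prod_nil, mul_one]
    rw [← Matrix.mulVec_mulVec]
    have h1 : ((1 : Matrix k k ℝ) - c • M).mulVec x = (1 - c * lam) • x := by
      rw [Matrix.sub_mulVec, Matrix.one_mulVec, Matrix.smul_mulVec, hx,
        smul_smul, sub_smul, one_smul]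
    rw [h1, Matrix.mulVec_smul, ih, smul_smul, mul_comm]

lemma gammaMulVecEig {k : Type*} [Fintype k] [DecidableEq k]
    (M : Matrix k k ℝ) (T : ℕ) (η : Fin T → ℝ) (x : k → ℝ) (lam : ℝ)
    (hx : M.mulVec x = lam • x) :
    (((List.ofFn (fun t : Fin T => (1 : Matrix k k ℝ) - η t • M)).reverse).prod).mulVec x
      = (∏ t : Fin T, (1 - η t * lam)) • x := by
  have h0 : List.ofFn (fun t : Fin T => (1 : Matrix k k ℝ) - η t • M)
      = ((List.finRange T).map η).map (fun c => (1 : Matrix k k ℝ) - c • M) := by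
    rw [List.map_map, List.ofFn_eq_map]
    rfl
  rw [h0, prodMulVecEig M x lam hx]
  congr 1
  rw [List.map_map, ← List.ofFn_eq_map, List.prod_ofFn]
  rfl


set_option maxHeartbeats 1000000 in
lemma keyIneq (β μ σ lp lm Pp Pm C g Ap Am : ℝ)
    (hμ : 0 < μ) (hσ : μ ≤ σ) (hβμ : 2 < β * μ)
    (hsum : lp + lm = β * σ ^ 2) (hprod : lp * lm = σ ^ 2)
    (hPp : Pp ^ 2 ≤ C) (hPm : Pm ^ 2 ≤ C)
    (hg : g = 4 / (β ^ 2 * μ ^ 2 - 4)) :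
    (Ap * Pp * lp + Am * Pm * lm) ^ 2 + σ ^ 2 * (Ap * Pp + Am * Pm) ^ 2
      ≤ (2 + 4 * g) * C * ((Ap * lp + Am * lm) ^ 2 + σ ^ 2 * (Ap + Am) ^ 2) := by
  have hσ0 : 0 < σ := lt_of_lt_of_le hμ hσ
  have hβ0 : 0 < β := by
    rcases lt_or_ge 0 β with h | h
    · exact h
    · nlinarith [mul_nonneg hμ.le (neg_nonneg.mpr h)]
  have hβσ : 2 < β * σ := by nlinarith [mul_le_mul_of_nonneg_left hσ hβ0.le]
  have hden : 0 < β ^ 2 * μ ^ 2 - 4 := by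
    nlinarith [mul_pos (by linarith : (0:ℝ) < β * μ - 2) (by linarith : (0:ℝ) < β * μ + 2)]
  have hg0 : 0 ≤ g := by rw [hg]; positivity
  have hC0 : 0 ≤ C := le_trans (sq_nonneg Pp) hPp
  set Np : ℝ := lp ^ 2 + σ ^ 2 with hNp
  set Nm : ℝ := lm ^ 2 + σ ^ 2 with hNm
  set S : ℝ := Ap ^ 2 * Np + Am ^ 2 * Nm with hS
  have hNp0 : 0 ≤ Np := by rw [hNp]; positivity
  have hNm0 : 0 ≤ Nm := by rw [hNm]; positivity
  have hS0 : 0 ≤ S := by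
    rw [hS]
    exact add_nonneg (mul_nonneg (sq_nonneg _) hNp0) (mul_nonneg (sq_nonneg _) hNm0)
  have hNN : Np * Nm = β ^ 2 * σ ^ 6 := by
    have h1 : Np * Nm = (lp * lm) ^ 2 + σ ^ 2 * ((lp + lm) ^ 2 - 2 * (lp * lm)) + σ ^ 4 := by
      rw [hNp, hNm]; ring
    rw [h1, hsum, hprod]; ring
  set t : ℝ := 4 * σ ^ 2 * |Ap * Am| with ht
  have ht0 : 0 ≤ t := by rw [ht]; positivity
  have hAM : 2 * |Ap * Am| * (β * σ ^ 3) ≤ S := by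
    have hX0 : 0 ≤ 2 * |Ap * Am| * (β * σ ^ 3) := by positivity
    have h2 : (2 * |Ap * Am| * (β * σ ^ 3)) ^ 2 = 4 * (Ap * Am) ^ 2 * (Np * Nm) := by
      rw [hNN, mul_pow, mul_pow, sq_abs]; ring
    have hsq : (2 * |Ap * Am| * (β * σ ^ 3)) ^ 2 ≤ S ^ 2 := by
      rw [h2, hS]
      nlinarith [sq_nonneg (Ap ^ 2 * Np - Am ^ 2 * Nm)]
    nlinarith [hsq, hX0, hS0]
  have htS : (β * σ) * t ≤ 2 * S := by
    have h : (β * σ) * t = 2 * (2 * |Ap * Am| * (β * σ ^ 3)) := by rw [ht]; ring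
    linarith
  have hPpPm : |Pp * Pm| ≤ C := by
    have h1 : |Pp * Pm| ^ 2 ≤ C ^ 2 := by
      rw [sq_abs]
      calc (Pp * Pm) ^ 2 = Pp ^ 2 * Pm ^ 2 := by ring
        _ ≤ C * C := mul_le_mul hPp hPm (sq_nonneg Pm) hC0
        _ = C ^ 2 := (sq C).symm
    nlinarith [abs_nonneg (Pp * Pm)]
  have hcross : Ap * Am * (Pp * Pm) ≤ |Ap * Am| * C := by
    calc Ap * Am * (Pp * Pm) ≤ |Ap * Am * (Pp * Pm)| := le_abs_self _
      _ = |Ap * Am| * |Pp * Pm| := abs_mul _ _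
      _ ≤ |Ap * Am| * C := mul_le_mul_of_nonneg_left hPpPm (abs_nonneg _)
  have hstepA : (Ap * Pp * lp + Am * Pm * lm) ^ 2 + σ ^ 2 * (Ap * Pp + Am * Pm) ^ 2
      ≤ C * (S + t) := by
    have expand : (Ap * Pp * lp + Am * Pm * lm) ^ 2 + σ ^ 2 * (Ap * Pp + Am * Pm) ^ 2
        = Ap ^ 2 * Pp ^ 2 * Np + Am ^ 2 * Pm ^ 2 * Nm
          + 2 * (Ap * Am * (Pp * Pm)) * (lp * lm + σ ^ 2) := by
      rw [hNp, hNm]; ring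
    rw [expand, hprod, hS, ht]
    have h1 : 0 ≤ Ap ^ 2 * Np * (C - Pp ^ 2) :=
      mul_nonneg (mul_nonneg (sq_nonneg _) hNp0) (sub_nonneg.mpr hPp)
    have h2 : 0 ≤ Am ^ 2 * Nm * (C - Pm ^ 2) :=
      mul_nonneg (mul_nonneg (sq_nonneg _) hNm0) (sub_nonneg.mpr hPm)
    have h3 : 2 * (Ap * Am * (Pp * Pm)) * (σ ^ 2 + σ ^ 2)
        ≤ 4 * σ ^ 2 * (|Ap * Am| * C) := by
      calc 2 * (Ap * Am * (Pp * Pm)) * (σ ^ 2 + σ ^ 2)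
          = 4 * σ ^ 2 * (Ap * Am * (Pp * Pm)) := by ring
        _ ≤ 4 * σ ^ 2 * (|Ap * Am| * C) :=
            mul_le_mul_of_nonneg_left hcross (by positivity)
    linarith [h1, h2, h3]
  have hstepB : S - t ≤ (Ap * lp + Am * lm) ^ 2 + σ ^ 2 * (Ap + Am) ^ 2 := by
    have expandR : (Ap * lp + Am * lm) ^ 2 + σ ^ 2 * (Ap + Am) ^ 2
        = Ap ^ 2 * Np + Am ^ 2 * Nm + 2 * (Ap * Am) * (lp * lm + σ ^ 2) := by
      rw [hNp, hNm]; ring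
    rw [expandR, hprod, hS, ht]
    have h := neg_abs_le (Ap * Am)
    linarith [mul_le_mul_of_nonneg_left (neg_abs_le (Ap * Am)) (by positivity : (0:ℝ) ≤ 4 * σ ^ 2)]
  have hpoly : 2 * (3 + 4 * g) ≤ (1 + 4 * g) * (β * μ) := by
    set x : ℝ := β * μ with hx
    have hx2 : 2 < x := hβμ
    have hgx : g = 4 / (x ^ 2 - 4) := by rw [hg, hx]; ring_nf
    have key : (1 + 4 * g) * x - 2 * (3 + 4 * g) = (x - 2) ^ 2 / (x + 2) := by
      rw [hgx]
      have h2 : x + 2 ≠ 0 := by nlinarith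
      have h3 : x ^ 2 - 4 ≠ 0 := by nlinarith
      field_simp
      ring
    have hnn : 0 ≤ (x - 2) ^ 2 / (x + 2) :=
      div_nonneg (sq_nonneg _) (by linarith)
    linarith [key ▸ hnn]
  have hstepC : (3 + 4 * g) * t ≤ (1 + 4 * g) * S := by
    have h1 : (3 + 4 * g) * ((β * σ) * t) ≤ (3 + 4 * g) * (2 * S) :=
      mul_le_mul_of_nonneg_left htS (by linarith)
    have h2 : (2 * (3 + 4 * g)) * S ≤ ((1 + 4 * g) * (β * μ)) * S :=
      mul_le_mul_of_nonneg_right hpoly hS0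
    have h3 : ((1 + 4 * g) * (β * μ)) * S ≤ ((1 + 4 * g) * (β * σ)) * S := by
      have hin : (1 + 4 * g) * (β * μ) ≤ (1 + 4 * g) * (β * σ) :=
        mul_le_mul_of_nonneg_left (mul_le_mul_of_nonneg_left hσ hβ0.le) (by linarith)
      exact mul_le_mul_of_nonneg_right hin hS0
    have h4 : ((3 + 4 * g) * t) * (β * σ) ≤ ((1 + 4 * g) * S) * (β * σ) := by
      linarith [h1, h2, h3]
    exact le_of_mul_le_mul_right h4 (by linarith)
  have htleS : t ≤ S := by
    linarith [mul_nonneg (sub_nonneg.mpr hβσ.le) ht0, htS]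
  have hfin1 : S + t ≤ (2 + 4 * g) * (S - t) := by linarith [hstepC]
  have hfin2 : C * (S + t) ≤ C * ((2 + 4 * g) * (S - t)) :=
    mul_le_mul_of_nonneg_left hfin1 hC0
  have hfin3 : (2 + 4 * g) * C * (S - t)
      ≤ (2 + 4 * g) * C * ((Ap * lp + Am * lm) ^ 2 + σ ^ 2 * (Ap + Am) ^ 2) :=
    mul_le_mul_of_nonneg_left hstepB (by positivity)
  calc (Ap * Pp * lp + Am * Pm * lm) ^ 2 + σ ^ 2 * (Ap * Pp + Am * Pm) ^ 2
      ≤ C * (S + t) := hstepA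
    _ ≤ C * ((2 + 4 * g) * (S - t)) := hfin2
    _ = (2 + 4 * g) * C * (S - t) := by ring
    _ ≤ _ := hfin3

lemma mainCore (m n : ℕ) (A : Matrix (Fin m) (Fin n) ℝ)
    (μ L β : ℝ) (hμ : 0 < μ)
    (hsv : ∀ σ : ℝ, 0 < σ →
      (∃ v : Fin n → ℝ, v ≠ 0 ∧ (Aᵀ * A).mulVec v = (σ ^ 2) • v) → σ ∈ Set.Icc μ L)
    (hβμ : 2 < β * μ)
    (M : Matrix (Fin n ⊕ Fin m) (Fin n ⊕ Fin m) ℝ)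
    (hM : M = Matrix.fromBlocks (β • (Aᵀ * A)) Aᵀ (-A) 0)
    (lammin lammax : ℝ)
    (hmaxpos : 0 < lammax)
    (hmax_eig : ∃ x : Fin n ⊕ Fin m → ℝ, x ≠ 0 ∧ M.mulVec x = lammax • x)
    (hext : ∀ lam : ℝ, lam ≠ 0 →
      (∃ x : Fin n ⊕ Fin m → ℝ, x ≠ 0 ∧ M.mulVec x = lam • x) →
      lammin ≤ lam ∧ lam ≤ lammax)
    (γ : ℝ) (hγ : γ = 4 / (β ^ 2 * μ ^ 2 - 4))
    (T : ℕ) (η : Fin T → ℝ)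
    (Γ : Matrix (Fin n ⊕ Fin m) (Fin n ⊕ Fin m) ℝ)
    (hΓ : Γ = ((List.ofFn (fun t : Fin T =>
        (1 : Matrix (Fin n ⊕ Fin m) (Fin n ⊕ Fin m) ℝ) - η t • M)).reverse).prod)
    (d : Fin n → ℝ) (v : Fin n → Fin n → ℝ)
    (hveig : ∀ i, (Aᵀ * A) *ᵥ v i = d i • v i)
    (hvON : ∀ i j, v i ⬝ᵥ v j = if i = j then 1 else 0)
    (hvexp : ∀ x : Fin n → ℝ, ∑ i, (v i ⬝ᵥ x) • v i = x)
    (w : Fin n ⊕ Fin m → ℝ)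
    (hw : ∀ z : Fin n ⊕ Fin m → ℝ, M.mulVec z = 0 → w ⬝ᵥ z = 0) :
    (Γ.mulVec w) ⬝ᵥ (Γ.mulVec w) ≤
      (2 + 4 * γ) *
        sSup ((fun lam : ℝ => ∏ t : Fin T, (1 - η t * lam) ^ 2) '' Set.Icc lammin lammax) *
        (w ⬝ᵥ w) := by
  classical
  have hβ0 : 0 < β := by
    rcases lt_or_ge 0 β with h | h
    · exact h
    · nlinarith [mul_nonneg hμ.le (neg_nonneg.mpr h)]
  -- basic facts about eigen data
  have hvne : ∀ i, v i ≠ 0 := by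
    intro i h
    have h1 := hvON i i
    rw [h, zero_dotProduct, if_pos rfl] at h1
    exact zero_ne_one h1
  have hdotAA : ∀ x y : Fin n → ℝ, x ⬝ᵥ ((Aᵀ * A) *ᵥ y) = (A *ᵥ x) ⬝ᵥ (A *ᵥ y) := by
    intro x y
    rw [← Matrix.mulVec_mulVec, Matrix.dotProduct_mulVec, Matrix.vecMul_transpose]
  have hdvv : ∀ i, d i = (A *ᵥ v i) ⬝ᵥ (A *ᵥ v i) := by
    intro i
    rw [← hdotAA, hveig i, dotProduct_smul, smul_eq_mul, hvON i i, if_pos rfl, mul_one]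
  have hd0 : ∀ i, 0 ≤ d i := fun i => (hdvv i) ▸ dotSelfNonneg _
  set σ : Fin n → ℝ := fun i => Real.sqrt (d i) with hσdef
  have hσsq : ∀ i, σ i ^ 2 = d i := fun i => Real.sq_sqrt (hd0 i)
  have hσpos : ∀ i, d i ≠ 0 → 0 < σ i := fun i h =>
    Real.sqrt_pos.mpr (lt_of_le_of_ne (hd0 i) (Ne.symm h))
  have hσμ : ∀ i, d i ≠ 0 → μ ≤ σ i := by
    intro i h
    have := hsv (σ i) (hσpos i h) ⟨v i, hvne i, by rw [hσsq i]; exact hveig i⟩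
    exact this.1
  set u : Fin n → Fin m → ℝ := fun i => (σ i)⁻¹ • (A *ᵥ v i) with hudef
  have hAv : ∀ i, d i ≠ 0 → A *ᵥ v i = σ i • u i := by
    intro i h
    rw [hudef]
    simp only [smul_smul, mul_inv_cancel₀ (hσpos i h).ne', one_smul]
  have hAvAv : ∀ i j, (A *ᵥ v i) ⬝ᵥ (A *ᵥ v j) = if i = j then d j else 0 := by
    intro i j
    rw [← hdotAA, hveig j, dotProduct_smul, smul_eq_mul, hvON i j]
    split <;> simp
  have huON : ∀ i j, d i ≠ 0 → d j ≠ 0 → u i ⬝ᵥ u j = if i = j then 1 else 0 := by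
    intro i j hi hj
    rw [hudef]
    simp only [smul_dotProduct, dotProduct_smul, hAvAv i j, smul_eq_mul]
    rcases eq_or_ne i j with h | h
    · subst h
      rw [if_pos rfl, if_pos rfl, ← hσsq i]
      have hne := (hσpos i hi).ne'
      field_simp
    · rw [if_neg h, if_neg h]
      ring
  have hAtu : ∀ i, d i ≠ 0 → Aᵀ *ᵥ u i = σ i • v i := by
    intro i h
    rw [hudef]
    simp only [Matrix.mulVec_smul]
    rw [Matrix.mulVec_mulVec, hveig i, smul_smul]
    congr 1
    rw [← hσsq i]
    have hne := (hσpos i h).ne'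
    field_simp
  have hAker : ∀ i, d i = 0 → A *ᵥ v i = 0 := by
    intro i h
    have h2 : (A *ᵥ v i) ⬝ᵥ (A *ᵥ v i) = 0 := by rw [← hdvv i, h]
    exact (dotProduct_self_eq_zero).mp h2
  -- the block vectors
  set E1 : Fin n → (Fin n ⊕ Fin m → ℝ) := fun i => Sum.elim (v i) 0 with hE1def
  set E2 : Fin n → (Fin n ⊕ Fin m → ℝ) := fun i => Sum.elim 0 (u i) with hE2def
  have hcomb : ∀ i (a b : ℝ), Sum.elim (a • v i) (b • u i) = a • E1 i + b • E2 i := by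
    intro i a b
    funext z
    cases z <;> simp [hE1def, hE2def]
  have hMelim : ∀ (x : Fin n → ℝ) (y : Fin m → ℝ),
      M *ᵥ Sum.elim x y = Sum.elim (β • ((Aᵀ * A) *ᵥ x) + Aᵀ *ᵥ y) (-(A *ᵥ x)) := by
    intro x y
    rw [hM, Matrix.fromBlocks_mulVec]
    simp only [Sum.elim_comp_inl, Sum.elim_comp_inr, Matrix.zero_mulVec, add_zero,
      Matrix.neg_mulVec, Matrix.smul_mulVec]
  have hME1 : ∀ i, d i ≠ 0 → M *ᵥ E1 i = (β * d i) • E1 i + (-(σ i)) • E2 i := by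
    intro i h
    show M *ᵥ Sum.elim (v i) 0 = _
    rw [hMelim, Matrix.mulVec_zero, add_zero, hveig i, hAv i h, smul_smul, ← neg_smul, hcomb]
  have hME2 : ∀ i, d i ≠ 0 → M *ᵥ E2 i = (σ i) • E1 i := by
    intro i h
    show M *ᵥ Sum.elim 0 (u i) = _
    rw [hMelim, Matrix.mulVec_zero, smul_zero, zero_add, Matrix.mulVec_zero, neg_zero,
      hAtu i h]
    funext z
    cases z <;> simp [hE1def]
  have hME1ker : ∀ i, d i = 0 → M *ᵥ E1 i = 0 := by
    intro i h
    show M *ᵥ Sum.elim (v i) 0 = _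
    rw [hMelim, hveig i, h, hAker i h]
    simp only [zero_smul, smul_zero, Matrix.mulVec_zero, add_zero, neg_zero]
    funext z
    cases z <;> rfl
  -- dot products of block vectors
  have hdotE : ∀ i j (a b c e : ℝ), (a • E1 i + b • E2 i) ⬝ᵥ (c • E1 j + e • E2 j)
      = a * c * (v i ⬝ᵥ v j) + b * e * (u i ⬝ᵥ u j) := by
    intro i j a b c e
    rw [hE1def, hE2def]
    show (a • Sum.elim (v i) (0 : Fin m → ℝ) + b • Sum.elim (0 : Fin n → ℝ) (u i)) ⬝ᵥ _ = _
    have h1 : ∀ (x : Fin n → ℝ) (y : Fin m → ℝ) (a b : ℝ),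
        a • Sum.elim x (0 : Fin m → ℝ) + b • Sum.elim (0 : Fin n → ℝ) y
          = Sum.elim (a • x) (b • y) := by
      intro x y a b
      funext z
      cases z <;> simp
    rw [h1, h1, sumElim_dotProduct_sumElim, smul_dotProduct,
      smul_dotProduct, dotProduct_smul, dotProduct_smul]
    simp only [smul_eq_mul]
    ring
    -- eigenvalues of the 2x2 blocks
  set δf : Fin n → ℝ := fun i => Real.sqrt (d i * (β ^ 2 * d i - 4)) with hδdef
  set lp : Fin n → ℝ := fun i => (β * d i + δf i) / 2 with hlpdef
  set lm : Fin n → ℝ := fun i => (β * d i - δf i) / 2 with hlmdef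
  have hdiscr : ∀ i, d i ≠ 0 → 0 < d i * (β ^ 2 * d i - 4) := by
    intro i h
    have h1 : μ ≤ σ i := hσμ i h
    have h2 : σ i ^ 2 = d i := hσsq i
    have hdpos : 0 < d i := lt_of_le_of_ne (hd0 i) (Ne.symm h)
    have h3 : μ ^ 2 ≤ d i := by nlinarith [hσpos i h]
    have hb2 : 4 < β ^ 2 * μ ^ 2 := by
      nlinarith [mul_pos (by linarith : (0:ℝ) < β * μ - 2)
        (by linarith : (0:ℝ) < β * μ + 2)]
    have hd2 : β ^ 2 * μ ^ 2 ≤ β ^ 2 * d i := by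
      nlinarith [mul_nonneg (mul_pos hβ0 hβ0).le (sub_nonneg.mpr h3)]
    have : 0 < β ^ 2 * d i - 4 := by linarith
    exact mul_pos hdpos this
  have hδpos : ∀ i, d i ≠ 0 → 0 < δf i := fun i h => Real.sqrt_pos.mpr (hdiscr i h)
  have hδsq : ∀ i, d i ≠ 0 → δf i ^ 2 = d i * (β ^ 2 * d i - 4) := fun i h =>
    Real.sq_sqrt (hdiscr i h).le
  have hsumlp : ∀ i, lp i + lm i = β * d i := by
    intro i
    rw [hlpdef, hlmdef]
    ring
  have hprodlp : ∀ i, d i ≠ 0 → lp i * lm i = d i := by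
    intro i h
    rw [hlpdef, hlmdef]
    have h2 := hδsq i h
    have expand : (β * d i + δf i) / 2 * ((β * d i - δf i) / 2)
        = (β ^ 2 * d i ^ 2 - δf i ^ 2) / 4 := by ring
    simp only
    rw [expand, h2]
    ring
  have hlmpos : ∀ i, d i ≠ 0 → 0 < lm i := by
    intro i h
    have hdpos : 0 < d i := lt_of_le_of_ne (hd0 i) (Ne.symm h)
    have h1 : δf i < β * d i := by
      rw [hδdef]
      simp only
      rw [show β * d i = Real.sqrt ((β * d i) ^ 2) from
        (Real.sqrt_sq (by positivity)).symm]
      apply Real.sqrt_lt_sqrt (hdiscr i h).le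
      nlinarith [hdpos]
    rw [hlmdef]
    simp only
    linarith
  have hlppos : ∀ i, d i ≠ 0 → 0 < lp i := by
    intro i h
    have hdpos : 0 < d i := lt_of_le_of_ne (hd0 i) (Ne.symm h)
    have h1 : 0 < δf i := hδpos i h
    rw [hlpdef]
    simp only
    nlinarith [mul_pos hβ0 hdpos]
  have hrootp : ∀ i, d i ≠ 0 → lp i ^ 2 - β * d i * lp i + d i = 0 := by
    intro i h
    have h2 := hδsq i h
    rw [hlpdef]
    simp only
    have expand : ((β * d i + δf i) / 2) ^ 2 - β * d i * ((β * d i + δf i) / 2) + d i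
        = (δf i ^ 2 - d i * (β ^ 2 * d i - 4)) / 4 := by ring
    rw [expand, h2]
    ring
  have hrootm : ∀ i, d i ≠ 0 → lm i ^ 2 - β * d i * lm i + d i = 0 := by
    intro i h
    have h2 := hδsq i h
    rw [hlmdef]
    simp only
    have expand : ((β * d i - δf i) / 2) ^ 2 - β * d i * ((β * d i - δf i) / 2) + d i
        = (δf i ^ 2 - d i * (β ^ 2 * d i - 4)) / 4 := by ring
    rw [expand, h2]
    ring
  have hMeig : ∀ i, d i ≠ 0 → ∀ lam, lam ^ 2 - β * d i * lam + d i = 0 →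
      M *ᵥ (lam • E1 i + (-(σ i)) • E2 i) = lam • (lam • E1 i + (-(σ i)) • E2 i) := by
    intro i hi lam hr
    rw [Matrix.mulVec_add, Matrix.mulVec_smul, Matrix.mulVec_smul, hME1 i hi, hME2 i hi]
    have hd2 : σ i ^ 2 = d i := hσsq i
    match_scalars
    · linear_combination (-1 : ℝ) * hr - hd2
    · ring
  have hlamIn : ∀ i, d i ≠ 0 → ∀ lam, 0 < lam → lam ^ 2 - β * d i * lam + d i = 0 →
      lammin ≤ lam ∧ lam ≤ lammax := by
    intro i hi lam hpos hr
    apply hext lam hpos.ne'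
    refine ⟨lam • E1 i + (-(σ i)) • E2 i, ?_, hMeig i hi lam hr⟩
    intro hz
    have hdd := hdotE i i lam (-(σ i)) lam (-(σ i))
    rw [hz, zero_dotProduct, hvON i i, huON i i hi hi] at hdd
    simp at hdd
    have hσp := hσpos i hi
    nlinarith [hdd, hσp, hpos]
  -- sup facts
  have hminmax : lammin ≤ lammax := (hext lammax hmaxpos.ne' hmax_eig).1
  set C := sSup ((fun lam : ℝ => ∏ t : Fin T, (1 - η t * lam) ^ 2) '' Set.Icc lammin lammax)
    with hCdef
  have hcont : Continuous fun lam : ℝ => ∏ t : Fin T, (1 - η t * lam) ^ 2 := by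
    apply continuous_finset_prod
    intro t _
    fun_prop
  have hbdd : BddAbove ((fun lam : ℝ => ∏ t : Fin T, (1 - η t * lam) ^ 2) ''
      Set.Icc lammin lammax) := (isCompact_Icc.image hcont).bddAbove
  have hCle : ∀ lam, lammin ≤ lam → lam ≤ lammax → (∏ t : Fin T, (1 - η t * lam)) ^ 2 ≤ C := by
    intro lam h1 h2
    rw [← Finset.prod_pow]
    exact le_csSup hbdd ⟨lam, ⟨h1, h2⟩, rfl⟩
    -- decomposition of w
  set x0 : Fin n → ℝ := fun j => w (Sum.inl j) with hx0def
  set y0 : Fin m → ℝ := fun j => w (Sum.inr j) with hy0def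
  have hwsplit : w = Sum.elim x0 y0 := by
    funext z
    cases z <;> rfl
  set I : Finset (Fin n) := Finset.univ.filter (fun i => d i ≠ 0) with hIdef
  have hIm : ∀ i, i ∈ I ↔ d i ≠ 0 := by
    intro i
    rw [hIdef, Finset.mem_filter]
    simp
  set a : Fin n → ℝ := fun i => x0 ⬝ᵥ v i with hadef
  set b : Fin n → ℝ := fun i => y0 ⬝ᵥ u i with hbdef
  have haoff : ∀ i, d i = 0 → a i = 0 := by
    intro i h
    have h1 : w ⬝ᵥ E1 i = 0 := hw (E1 i) (hME1ker i h)
    rw [hwsplit] at h1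
    simp only [hE1def] at h1
    rw [sumElim_dotProduct_sumElim, dotProduct_zero, add_zero] at h1
    exact h1
  have hx0sum : x0 = ∑ i ∈ I, a i • v i := by
    calc x0 = ∑ i, (v i ⬝ᵥ x0) • v i := (hvexp x0).symm
      _ = ∑ i, a i • v i := by
          apply Finset.sum_congr rfl
          intro i _
          rw [hadef]
          simp only
          rw [dotProduct_comm]
      _ = ∑ i ∈ I, a i • v i := by
          symm
          apply Finset.sum_subset (Finset.subset_univ I)
          intro i _ hiI
          have h0 : d i = 0 := by
            by_contra hne
            exact hiI ((hIm i).mpr hne)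
          rw [haoff i h0, zero_smul]
  set r2 : Fin m → ℝ := y0 - ∑ i ∈ I, b i • u i with hr2def
  have hr2u : ∀ j, d j ≠ 0 → r2 ⬝ᵥ u j = 0 := by
    intro j hj
    rw [hr2def, sub_dotProduct, sumDotAux]
    have h2 : ∑ i ∈ I, (b i • u i) ⬝ᵥ u j = ∑ i ∈ I, (if i = j then b i else 0) := by
      apply Finset.sum_congr rfl
      intro i hiI
      rw [smul_dotProduct, huON i j ((hIm i).mp hiI) hj, smul_eq_mul]
      split <;> simp
    rw [h2, Finset.sum_ite_eq' I j b, if_pos ((hIm j).mpr hj)]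
    simp [hbdef]
  have hAtr2 : Aᵀ *ᵥ r2 = 0 := by
    have h := hvexp (Aᵀ *ᵥ r2)
    rw [← h]
    apply Finset.sum_eq_zero
    intro i _
    have hcoef : v i ⬝ᵥ (Aᵀ *ᵥ r2) = (A *ᵥ v i) ⬝ᵥ r2 := by
      rw [Matrix.dotProduct_mulVec, Matrix.vecMul_transpose]
    rcases eq_or_ne (d i) 0 with h0 | h0
    · rw [hcoef, hAker i h0, zero_dotProduct, zero_smul]
    · rw [hcoef, hAv i h0, smul_dotProduct, dotProduct_comm (u i) r2,
        hr2u i h0]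
      simp
  have hy0sum : y0 = ∑ i ∈ I, b i • u i := by
    have hz : M *ᵥ Sum.elim (0 : Fin n → ℝ) r2 = 0 := by
      rw [hMelim, Matrix.mulVec_zero, smul_zero, zero_add, hAtr2, Matrix.mulVec_zero,
        neg_zero]
      funext z
      cases z <;> rfl
    have h1 : w ⬝ᵥ Sum.elim (0 : Fin n → ℝ) r2 = 0 := hw _ hz
    rw [hwsplit, sumElim_dotProduct_sumElim, dotProduct_zero, zero_add] at h1
    have h2 : (∑ i ∈ I, b i • u i) ⬝ᵥ r2 = 0 := by
      rw [sumDotAux]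
      apply Finset.sum_eq_zero
      intro i hiI
      rw [smul_dotProduct, dotProduct_comm (u i) r2, hr2u i ((hIm i).mp hiI),
        smul_zero]
    have h3 : r2 ⬝ᵥ r2 = 0 := by
      have h4 : r2 ⬝ᵥ r2 = (y0 - ∑ i ∈ I, b i • u i) ⬝ᵥ r2 := by rw [← hr2def]
      rw [h4, sub_dotProduct, h1, h2, sub_zero]
    have h4 : r2 = 0 := dotProduct_self_eq_zero.mp h3
    rw [hr2def] at h4
    exact sub_eq_zero.mp h4
  have hwdecomp : w = ∑ i ∈ I, (a i • E1 i + b i • E2 i) := by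
    rw [hwsplit]
    funext z
    cases z with
    | inl j =>
      rw [Sum.elim_inl, show x0 j = (∑ i ∈ I, a i • v i) j from congrFun hx0sum j]
      simp [hE1def, hE2def, Finset.sum_apply]
    | inr j =>
      rw [Sum.elim_inr, show y0 j = (∑ i ∈ I, b i • u i) j from congrFun hy0sum j]
      simp [hE1def, hE2def, Finset.sum_apply]
  -- action of Γ
  set Pp : Fin n → ℝ := fun i => ∏ t : Fin T, (1 - η t * lp i) with hPpdef
  set Pm : Fin n → ℝ := fun i => ∏ t : Fin T, (1 - η t * lm i) with hPmdef
  have hΓp : ∀ i, d i ≠ 0 → Γ *ᵥ (lp i • E1 i + (-(σ i)) • E2 i)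
      = Pp i • (lp i • E1 i + (-(σ i)) • E2 i) := by
    intro i h
    rw [hΓ]
    exact gammaMulVecEig M T η _ (lp i) (hMeig i h (lp i) (hrootp i h))
  have hΓm : ∀ i, d i ≠ 0 → Γ *ᵥ (lm i • E1 i + (-(σ i)) • E2 i)
      = Pm i • (lm i • E1 i + (-(σ i)) • E2 i) := by
    intro i h
    rw [hΓ]
    exact gammaMulVecEig M T η _ (lm i) (hMeig i h (lm i) (hrootm i h))
  set Ap : Fin n → ℝ := fun i => (a i + (lm i / σ i) * b i) / δf i with hApdef
  set Am : Fin n → ℝ := fun i => -((a i + (lp i / σ i) * b i) / δf i) with hAmdef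
  have hδdiff : ∀ i, lp i - lm i = δf i := by
    intro i
    rw [hlpdef, hlmdef]
    ring
  have hab1 : ∀ i, d i ≠ 0 → Ap i * lp i + Am i * lm i = a i := by
    intro i h
    rw [hApdef, hAmdef]
    simp only
    rw [← hδdiff i]
    have hσne := (hσpos i h).ne'
    have hdne : lp i - lm i ≠ 0 := by
      rw [hδdiff i]
      exact (hδpos i h).ne'
    field_simp
    ring
  have hab2 : ∀ i, d i ≠ 0 → -(σ i) * (Ap i + Am i) = b i := by
    intro i h
    rw [hApdef, hAmdef]
    simp only
    rw [← hδdiff i]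
    have hσne := (hσpos i h).ne'
    have hdne : lp i - lm i ≠ 0 := by
      rw [hδdiff i]
      exact (hδpos i h).ne'
    field_simp
    ring
  have hvec : ∀ i, d i ≠ 0 → a i • E1 i + b i • E2 i
      = Ap i • (lp i • E1 i + (-(σ i)) • E2 i) + Am i • (lm i • E1 i + (-(σ i)) • E2 i) := by
    intro i h
    rw [← hab1 i h, ← hab2 i h]
    module
  have hΓid : ∀ i, d i ≠ 0 → Γ *ᵥ (a i • E1 i + b i • E2 i)
      = (Ap i * Pp i * lp i + Am i * Pm i * lm i) • E1 i
        + (-(σ i) * (Ap i * Pp i + Am i * Pm i)) • E2 i := by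
    intro i h
    rw [hvec i h, Matrix.mulVec_add, Matrix.mulVec_smul, Matrix.mulVec_smul,
      hΓp i h, hΓm i h]
    module
  have hΓw : Γ *ᵥ w = ∑ i ∈ I, ((Ap i * Pp i * lp i + Am i * Pm i * lm i) • E1 i
      + (-(σ i) * (Ap i * Pp i + Am i * Pm i)) • E2 i) := by
    conv_lhs => rw [hwdecomp]
    rw [mulVecSumAux]
    apply Finset.sum_congr rfl
    intro i hiI
    exact hΓid i ((hIm i).mp hiI)
  -- norm identity
  have hnorm : ∀ (c e : Fin n → ℝ),
      (∑ i ∈ I, (c i • E1 i + e i • E2 i)) ⬝ᵥ (∑ i ∈ I, (c i • E1 i + e i • E2 i))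
        = ∑ i ∈ I, (c i ^ 2 + e i ^ 2) := by
    intro c e
    rw [sumDotAux]
    apply Finset.sum_congr rfl
    intro i hiI
    rw [dotSumAux]
    have h1 : ∀ j ∈ I, (c i • E1 i + e i • E2 i) ⬝ᵥ (c j • E1 j + e j • E2 j)
        = if i = j then c i ^ 2 + e i ^ 2 else 0 := by
      intro j hjI
      rw [hdotE i j, hvON i j, huON i j ((hIm i).mp hiI) ((hIm j).mp hjI)]
      rcases eq_or_ne i j with hij | hij
      · subst hij
        simp
        ring
      · simp only [if_neg hij]
        ring
    calc ∑ j ∈ I, (c i • E1 i + e i • E2 i) ⬝ᵥ (c j • E1 j + e j • E2 j)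
        = ∑ j ∈ I, (if i = j then c i ^ 2 + e i ^ 2 else 0) := Finset.sum_congr rfl h1
      _ = c i ^ 2 + e i ^ 2 := by rw [Finset.sum_ite_eq I i, if_pos hiI]
  have hwnorm : w ⬝ᵥ w = ∑ i ∈ I, (a i ^ 2 + b i ^ 2) := by
    conv_lhs => rw [hwdecomp]
    exact hnorm a b
  have hΓnorm : (Γ *ᵥ w) ⬝ᵥ (Γ *ᵥ w) = ∑ i ∈ I, ((Ap i * Pp i * lp i + Am i * Pm i * lm i) ^ 2
      + (-(σ i) * (Ap i * Pp i + Am i * Pm i)) ^ 2) := by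
    rw [hΓw]
    exact hnorm (fun i => Ap i * Pp i * lp i + Am i * Pm i * lm i)
      (fun i => -(σ i) * (Ap i * Pp i + Am i * Pm i))
  rw [hΓnorm, hwnorm, Finset.mul_sum]
  apply Finset.sum_le_sum
  intro i hiI
  have hi := (hIm i).mp hiI
  have hPple : Pp i ^ 2 ≤ C := by
    have hin := hlamIn i hi (lp i) (hlppos i hi) (hrootp i hi)
    rw [hPpdef]
    exact hCle (lp i) hin.1 hin.2
  have hPmle : Pm i ^ 2 ≤ C := by
    have hin := hlamIn i hi (lm i) (hlmpos i hi) (hrootm i hi)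
    rw [hPmdef]
    exact hCle (lm i) hin.1 hin.2
  have key := keyIneq β μ (σ i) (lp i) (lm i) (Pp i) (Pm i) C γ (Ap i) (Am i)
    hμ (hσμ i hi) hβμ (by rw [hσsq i]; exact hsumlp i) (by rw [hσsq i]; exact hprodlp i hi)
    hPple hPmle hγ
  have ha' := hab1 i hi
  have hb' := hab2 i hi
  calc (Ap i * Pp i * lp i + Am i * Pm i * lm i) ^ 2
        + (-(σ i) * (Ap i * Pp i + Am i * Pm i)) ^ 2
      = (Ap i * Pp i * lp i + Am i * Pm i * lm i) ^ 2
        + σ i ^ 2 * (Ap i * Pp i + Am i * Pm i) ^ 2 := by ring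
    _ ≤ (2 + 4 * γ) * C * ((Ap i * lp i + Am i * lm i) ^ 2 + σ i ^ 2 * (Ap i + Am i) ^ 2) :=
        key
    _ = (2 + 4 * γ) * C * (a i ^ 2 + b i ^ 2) := by
        rw [← ha', ← hb']
        ring

/-- For the primal-dual update matrix `M` of a full-row-rank matrix `A`
whose singular values all lie in `[μ, L]`, with `β > 2/μ`, `γ = 4/(β²μ² − 4)`, and
`λmin, λmax` the smallest and largest nonzero eigenvalues of `M`, the product
`Γ = (I − η_T M)⋯(I − η₁ M)` satisfies, for every `w` orthogonal to the kernel of `M`,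
`‖Γw‖₂² ≤ (2 + 4γ) · (max_{λ ∈ [λmin,λmax]} ∏ (1 − η_t λ)²) · ‖w‖₂²`. -/
theorem stmt9 (m n : ℕ) (hmn : m ≤ n) (A : Matrix (Fin m) (Fin n) ℝ)
    (hrank : A.rank = m) (μ L β : ℝ) (hμ : 0 < μ) (hμL : μ ≤ L)
    (hsv : ∀ σ : ℝ, 0 < σ →
      (∃ v : Fin n → ℝ, v ≠ 0 ∧ (Aᵀ * A).mulVec v = (σ ^ 2) • v) → σ ∈ Set.Icc μ L)
    (hβ : 2 / μ < β)
    (M : Matrix (Fin n ⊕ Fin m) (Fin n ⊕ Fin m) ℝ)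
    (hM : M = Matrix.fromBlocks (β • (Aᵀ * A)) Aᵀ (-A) 0)
    (lammin lammax : ℝ) (hminpos : 0 < lammin) (hmaxpos : 0 < lammax)
    (hmin_eig : ∃ x : Fin n ⊕ Fin m → ℝ, x ≠ 0 ∧ M.mulVec x = lammin • x)
    (hmax_eig : ∃ x : Fin n ⊕ Fin m → ℝ, x ≠ 0 ∧ M.mulVec x = lammax • x)
    (hext : ∀ lam : ℝ, lam ≠ 0 →
      (∃ x : Fin n ⊕ Fin m → ℝ, x ≠ 0 ∧ M.mulVec x = lam • x) →
      lammin ≤ lam ∧ lam ≤ lammax)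
    (γ : ℝ) (hγ : γ = 4 / (β ^ 2 * μ ^ 2 - 4))
    (T : ℕ) (hT : 1 ≤ T) (η : Fin T → ℝ)
    (Γ : Matrix (Fin n ⊕ Fin m) (Fin n ⊕ Fin m) ℝ)
    (hΓ : Γ = ((List.ofFn (fun t : Fin T =>
        (1 : Matrix (Fin n ⊕ Fin m) (Fin n ⊕ Fin m) ℝ) - η t • M)).reverse).prod) :
    ∀ w : Fin n ⊕ Fin m → ℝ, (∀ z : Fin n ⊕ Fin m → ℝ, M.mulVec z = 0 → w ⬝ᵥ z = 0) →
      (Γ.mulVec w) ⬝ᵥ (Γ.mulVec w) ≤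
        (2 + 4 * γ) *
          sSup ((fun lam : ℝ => ∏ t : Fin T, (1 - η t * lam) ^ 2) '' Set.Icc lammin lammax) *
          (w ⬝ᵥ w) := by
  intro w hw
  have hβμ : 2 < β * μ := by
    rw [div_lt_iff₀ hμ] at hβ
    linarith
  have hB : (Aᵀ * A).IsHermitian := by simpa using Matrix.isHermitian_conjTranspose_mul_self A
  have hvON : ∀ i j, (⇑(hB.eigenvectorBasis i) : Fin n → ℝ) ⬝ᵥ ⇑(hB.eigenvectorBasis j)
      = if i = j then 1 else 0 := by
    intro i j
    have h := hB.eigenvectorBasis.orthonormal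
    rw [orthonormal_iff_ite] at h
    have h2 := h i j
    rw [dotProduct_comm]
    simpa [PiLp.inner_apply, RCLike.inner_apply, dotProduct] using h2
  have hvexp : ∀ x : Fin n → ℝ, ∑ i, ((⇑(hB.eigenvectorBasis i) : Fin n → ℝ) ⬝ᵥ x) •
      (⇑(hB.eigenvectorBasis i) : Fin n → ℝ) = x := by
    intro x
    have h := hB.eigenvectorBasis.sum_repr (WithLp.toLp 2 x)
    have h2 : ∀ i, hB.eigenvectorBasis.repr (WithLp.toLp 2 x) i
        = (⇑(hB.eigenvectorBasis i) : Fin n → ℝ) ⬝ᵥ x := by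
      intro i
      rw [hB.eigenvectorBasis.repr_apply_apply, dotProduct_comm]
      simp [PiLp.inner_apply, RCLike.inner_apply, dotProduct]
    simp_rw [h2] at h
    have h3 := congrArg WithLp.ofLp h
    simpa using h3
  exact mainCore m n A μ L β hμ hsv hβμ M hM lammin lammax hmaxpos hmax_eig hext γ hγ
    T η Γ hΓ (fun i => hB.eigenvalues i) (fun i => ⇑(hB.eigenvectorBasis i))
    (fun i => hB.mulVec_eigenvectorBasis i) hvON hvexp w hw
end

section
/- Chebyshev minimax optimality: let 0 < a < b be real numbers, let t ≥ 1 be a natural number, let T_t denote the degree-t Chebyshev polynomial of the first kind over ℝ, and define the affine map σ(λ) = (b+a)/(b−a) − 2λ/(b−a), which maps [a, b] onto [−1, 1]. Then T_t(σ(0)) > 0, the polynomial p(λ) = T_t(σ(λ))/T_t(σ(0)) has degree t and satisfies p(0) = 1, and for every real polynomial q of degree at most t with q(0) = 1, sup_{λ ∈ [a,b]} |p(λ)| ≤ sup_{λ ∈ [a,b]} |q(λ)|. -/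
open Polynomial Polynomial.Chebyshev Real

lemma T_deg_aux (n : ℕ) : (T ℝ (n:ℤ)).natDegree ≤ n ∧ (T ℝ (n:ℤ)).coeff n = 2^(n-1) := by
  induction n using Nat.twoStepInduction with
  | zero => simp
  | one => simp
  | more n ih ih1 =>
    obtain ⟨h1, h2⟩ := ih
    obtain ⟨h3, h4⟩ := ih1
    have e : ((n:ℤ)+2) = ((n+2 : ℕ) : ℤ) := by push_cast; ring
    have e1 : ((n:ℤ)+1) = ((n+1 : ℕ) : ℤ) := by push_cast; ring
    have ht2 : T ℝ ((n+2:ℕ):ℤ) = 2 * X * T ℝ ((n+1:ℕ):ℤ) - T ℝ (n:ℤ) := by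
      rw [← e, ← e1, T_add_two]
    constructor
    · rw [ht2]
      refine le_trans (natDegree_sub_le _ _) ?_
      simp only [max_le_iff]
      constructor
      · refine le_trans (natDegree_mul_le) ?_
        have : (2 * X : ℝ[X]).natDegree ≤ 1 := by
          refine le_trans (natDegree_mul_le) ?_
          simp
        omega
      · omega
    · rw [ht2]
      rw [coeff_sub, coeff_eq_zero_of_natDegree_lt (by omega : (T ℝ (n:ℤ)).natDegree < n + 2)]
      have : (2 * X * T ℝ ((n+1:ℕ):ℤ)).coeff (n+2) = 2 * (T ℝ ((n+1:ℕ):ℤ)).coeff (n+1) := by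
        rw [mul_assoc, coeff_ofNat_mul, coeff_X_mul]
      rw [this, h4]
      simp [pow_succ]
      ring

lemma T_natDegree' (n : ℕ) : (T ℝ (n:ℤ)).natDegree = n := by
  obtain ⟨h1, h2⟩ := T_deg_aux n
  refine le_antisymm h1 (le_natDegree_of_ne_zero ?_)
  rw [h2]; positivity

lemma T_one_le {x : ℝ} (hx : 1 ≤ x) (n : ℕ) :
    1 ≤ (T ℝ (n:ℤ)).eval x ∧ (T ℝ (n:ℤ)).eval x ≤ (T ℝ ((n:ℤ)+1)).eval x := by
  induction n with
  | zero => simpa using hx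
  | succ n ih =>
    obtain ⟨h1, h2⟩ := ih
    have key : (T ℝ ((n:ℤ)+2)).eval x = 2 * x * (T ℝ ((n:ℤ)+1)).eval x - (T ℝ (n:ℤ)).eval x := by
      rw [T_add_two]; simp
    have h3 : (1:ℝ) ≤ (T ℝ ((n:ℤ)+1)).eval x := le_trans h1 h2
    have h4 : (T ℝ ((n:ℤ)+1)).eval x ≤ (T ℝ ((n:ℤ)+2)).eval x := by
      rw [key]; nlinarith
    constructor
    · push_cast; exact h3
    · push_cast
      have e : ((n:ℤ)+1+1) = (n:ℤ)+2 := by ring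
      rw [e]; exact h4

lemma T_abs_le {y : ℝ} (hy : y ∈ Set.Icc (-1:ℝ) 1) (n : ℤ) : |(T ℝ n).eval y| ≤ 1 := by
  obtain ⟨θ, _, rfl⟩ := Real.surjOn_cos hy
  rw [T_real_cos]
  exact Real.abs_cos_le_one _

set_option maxHeartbeats 1000000 in
/-- **Chebyshev minimax optimality.** For `0 < a < b`, `t ≥ 1`, and the
affine map `σ(λ) = (b+a)/(b−a) − 2λ/(b−a)`, the value `T_t(σ(0))` is positive, the
rescaled polynomial `p = T_t ∘ σ / T_t(σ(0))` has degree `t` and satisfies `p(0) = 1`,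
and among all real polynomials `q` of degree at most `t` with `q(0) = 1`, `p` minimizes
the sup of `|·|` over `[a, b]`. -/
theorem stmt11 (a b : ℝ) (ha : 0 < a) (hab : a < b) (t : ℕ) (ht : 1 ≤ t)
    (P : Polynomial ℝ)
    (hP : P = Polynomial.C ((Polynomial.Chebyshev.T ℝ (t : ℤ)).eval ((b + a) / (b - a)))⁻¹ *
      ((Polynomial.Chebyshev.T ℝ (t : ℤ)).comp
        (Polynomial.C ((b + a) / (b - a)) - Polynomial.C (2 / (b - a)) * Polynomial.X))) :
    0 < (Polynomial.Chebyshev.T ℝ (t : ℤ)).eval ((b + a) / (b - a)) ∧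
    P.natDegree = t ∧
    P.eval 0 = 1 ∧
    ∀ q : Polynomial ℝ, q.natDegree ≤ t → q.eval 0 = 1 →
      sSup ((fun lam : ℝ => |P.eval lam|) '' Set.Icc a b) ≤
      sSup ((fun lam : ℝ => |q.eval lam|) '' Set.Icc a b) := by
  have hba : (0:ℝ) < b - a := by linarith
  set c : ℝ := (b + a) / (b - a) with hc
  set d : ℝ := 2 / (b - a) with hd
  have hd0 : 0 < d := by rw [hd]; positivity
  have hc1 : 1 < c := by rw [hc, lt_div_iff₀ hba]; linarith
  have hT1 : 1 ≤ (T ℝ (t:ℤ)).eval c := (T_one_le hc1.le t).1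
  have hTpos : 0 < (T ℝ (t:ℤ)).eval c := lt_of_lt_of_le one_pos hT1
  set M : ℝ := ((T ℝ (t:ℤ)).eval c)⁻¹ with hM
  have hM0 : 0 < M := inv_pos.mpr hTpos
  have ht0 : (0:ℝ) < t := by exact_mod_cast ht
  -- evaluation formula
  have hPeval : ∀ x : ℝ, P.eval x = M * (T ℝ (t:ℤ)).eval (c - d * x) := by
    intro x
    rw [hP]
    simp [eval_comp]
  -- degree
  have hdeg : P.natDegree = t := by
    have hL : (C c - C d * X : ℝ[X]) = C (-d) * X + C c := by
      simp [map_neg]; ring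
    rw [hP, natDegree_C_mul (inv_ne_zero hTpos.ne'), natDegree_comp, hL,
      natDegree_linear (neg_ne_zero.mpr hd0.ne'), mul_one, T_natDegree']
  -- eval at 0
  have hP0 : P.eval 0 = 1 := by
    rw [hPeval 0]
    rw [hM, mul_zero, sub_zero]
    exact inv_mul_cancel₀ hTpos.ne'
  refine ⟨hTpos, hdeg, hP0, ?_⟩
  intro q hqdeg hq0
  by_contra hcon
  push_neg at hcon
  -- basic sup facts
  have hne : (Set.Icc a b).Nonempty := ⟨a, le_refl a, le_of_lt hab⟩
  have hbddq : BddAbove ((fun lam : ℝ => |q.eval lam|) '' Set.Icc a b) :=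
    (isCompact_Icc.image ((Polynomial.continuous q).abs)).bddAbove
  -- sigma maps [a,b] into [-1,1]
  have hsig : ∀ x ∈ Set.Icc a b, c - d * x ∈ Set.Icc (-1:ℝ) 1 := by
    intro x hx
    obtain ⟨h1, h2⟩ := hx
    have e : c - d * x = (b + a - 2*x) / (b - a) := by
      rw [hc, hd]; field_simp
    rw [e]
    constructor
    · rw [le_div_iff₀ hba]; linarith
    · rw [div_le_iff₀ hba]; linarith
  -- bound on |P| over [a,b]
  have hPbound : ∀ x ∈ Set.Icc a b, |P.eval x| ≤ M := by
    intro x hx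
    rw [hPeval, abs_mul, abs_of_pos hM0]
    calc M * |(T ℝ (t:ℤ)).eval (c - d * x)| ≤ M * 1 := by
          gcongr
          exact T_abs_le (hsig x hx) _
      _ = M := mul_one M
  have hSPle : sSup ((fun lam : ℝ => |P.eval lam|) '' Set.Icc a b) ≤ M :=
    csSup_le (hne.image _) (by rintro _ ⟨x, hx, rfl⟩; exact hPbound x hx)
  -- alternation points
  set θf : ℕ → ℝ := fun k => k * π / t with hθf
  set xp : ℕ → ℝ := fun k => (c - Real.cos (θf k)) / d with hxp
  have hθmem : ∀ k, k ≤ t → θf k ∈ Set.Icc 0 π := by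
    intro k hk
    constructor
    · rw [hθf]; positivity
    · rw [hθf, div_le_iff₀ ht0]
      have : (k:ℝ) ≤ t := by exact_mod_cast hk
      nlinarith [Real.pi_pos]
  have hσx : ∀ k, c - d * xp k = Real.cos (θf k) := by
    intro k
    rw [hxp]
    field_simp; ring
  have hxmem : ∀ k, k ≤ t → xp k ∈ Set.Icc a b := by
    intro k hk
    have hcos : Real.cos (θf k) ∈ Set.Icc (-1:ℝ) 1 := ⟨Real.neg_one_le_cos _, Real.cos_le_one _⟩
    obtain ⟨hc1', hc2'⟩ := hcos
    have had : a * d = c - 1 := by rw [hc, hd]; field_simp; ring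
    have hbd : b * d = c + 1 := by rw [hc, hd]; field_simp; ring
    constructor
    · rw [hxp, le_div_iff₀ hd0]; linarith
    · rw [hxp, div_le_iff₀ hd0]; linarith
  have hxlt : ∀ k k', k < k' → k' ≤ t → xp k < xp k' := by
    intro k k' hkk hk't
    have h1 : θf k < θf k' := by
      rw [hθf]
      have hkr : (k:ℝ) < k' := by exact_mod_cast hkk
      have hpi := Real.pi_pos
      rw [div_lt_div_iff₀ ht0 ht0]
      nlinarith [mul_pos (mul_pos (sub_pos.mpr hkr) hpi) ht0]
    have h2 : Real.cos (θf k') < Real.cos (θf k) :=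
      Real.strictAntiOn_cos (hθmem k (hkk.le.trans hk't)) (hθmem k' hk't) h1
    simp only [hxp]
    rw [div_lt_div_iff₀ hd0 hd0]
    nlinarith [mul_pos (sub_pos.mpr h2) hd0]
  have hxle : ∀ k k', k ≤ k' → k' ≤ t → xp k ≤ xp k' := by
    intro k k' h1 h2
    rcases eq_or_lt_of_le h1 with rfl | h
    · exact le_refl _
    · exact (hxlt _ _ h h2).le
  have hcoskpi : ∀ k : ℕ, Real.cos ((k:ℝ) * π) = (-1)^k := by
    intro k; simpa using Real.cos_add_nat_mul_pi 0 k
  have hPx : ∀ k, k ≤ t → P.eval (xp k) = M * (-1)^k := by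
    intro k hk
    rw [hPeval, hσx, T_real_cos]
    congr 1
    have e : ((t:ℤ):ℝ) * θf k = (k:ℝ) * π := by
      simp only [hθf]
      push_cast
      field_simp
    rw [e, hcoskpi]
  have hqlt : ∀ k, k ≤ t → |q.eval (xp k)| < M := by
    intro k hk
    have h1 : |q.eval (xp k)| ≤ sSup ((fun lam : ℝ => |q.eval lam|) '' Set.Icc a b) :=
      le_csSup hbddq ⟨xp k, hxmem k hk, rfl⟩
    exact lt_of_le_of_lt h1 (lt_of_lt_of_le hcon hSPle)
  set r : ℝ[X] := P - q with hr
  have hrdeg : r.natDegree ≤ t :=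
    le_trans (natDegree_sub_le _ _) (by rw [hdeg]; exact max_le le_rfl hqdeg)
  have hr0 : r.eval 0 = 0 := by rw [hr, eval_sub, hP0, hq0, sub_self]
  have hsq : ∀ k : ℕ, ((-1:ℝ)^k) * ((-1:ℝ)^k) = 1 := by
    intro k; rw [← pow_add]; exact Even.neg_one_pow ⟨k, rfl⟩
  have hsign : ∀ k, k ≤ t → 0 < (-1:ℝ)^k * r.eval (xp k) := by
    intro k hk
    rw [hr, eval_sub, hPx k hk]
    have h1 := hqlt k hk
    have h2 : (-1:ℝ)^k * q.eval (xp k) ≤ |q.eval (xp k)| := by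
      calc (-1:ℝ)^k * q.eval (xp k) ≤ |(-1:ℝ)^k * q.eval (xp k)| := le_abs_self _
        _ = |q.eval (xp k)| := by rw [abs_mul, abs_pow, abs_neg, abs_one, one_pow, one_mul]
    have h3 := hsq k
    nlinarith
  have hroot : ∀ k : Fin t, ∃ z ∈ Set.Ioo (xp k) (xp ((k:ℕ)+1)), r.eval z = 0 := by
    intro k
    have hk1 : (k:ℕ) + 1 ≤ t := k.isLt
    have hlt : xp k < xp ((k:ℕ)+1) := hxlt _ _ (Nat.lt_succ_self _) hk1
    have hcont : ContinuousOn (fun z : ℝ => r.eval z) (Set.Icc (xp k) (xp ((k:ℕ)+1))) :=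
      (Polynomial.continuous r).continuousOn
    have s1 := hsign k (le_of_lt k.isLt)
    have s2 := hsign ((k:ℕ)+1) hk1
    rcases Nat.even_or_odd (k:ℕ) with he | ho
    · have h1 : 0 < r.eval (xp k) := by rwa [he.neg_one_pow, one_mul] at s1
      have h2 : r.eval (xp ((k:ℕ)+1)) < 0 := by
        rw [pow_succ, he.neg_one_pow, one_mul] at s2
        nlinarith
      have := intermediate_value_Ioo' hlt.le hcont
      obtain ⟨z, hz, hz0⟩ := this ⟨h2, h1⟩
      exact ⟨z, hz, hz0⟩
    · have h1 : r.eval (xp k) < 0 := by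
        rw [ho.neg_one_pow] at s1; nlinarith
      have h2 : 0 < r.eval (xp ((k:ℕ)+1)) := by
        rw [pow_succ, ho.neg_one_pow] at s2; nlinarith
      have := intermediate_value_Ioo hlt.le hcont
      obtain ⟨z, hz, hz0⟩ := this ⟨h1, h2⟩
      exact ⟨z, hz, hz0⟩
  choose y hy hy0 using hroot
  have hymono : StrictMono y := by
    intro i j hij
    have h1 : (i:ℕ)+1 ≤ (j:ℕ) := hij
    calc y i < xp ((i:ℕ)+1) := (hy i).2
      _ ≤ xp (j:ℕ) := hxle _ _ h1 (le_of_lt j.isLt)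
      _ < y j := (hy j).1
  have hypos : ∀ i : Fin t, 0 < y i := by
    intro i
    have h1 := (hy i).1
    have h2 := (hxmem (i:ℕ) (le_of_lt i.isLt)).1
    linarith
  set g : Fin (t+1) → ℝ := Fin.cons 0 y with hg
  have hginj : Function.Injective g := by
    intro i j hij
    simp only [hg] at hij
    induction i using Fin.cases with
    | zero =>
      induction j using Fin.cases with
      | zero => rfl
      | succ j =>
        rw [Fin.cons_zero, Fin.cons_succ] at hij
        exact absurd hij.symm (hypos j).ne'
    | succ i =>
      induction j using Fin.cases with
      | zero =>
        rw [Fin.cons_zero, Fin.cons_succ] at hij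
        exact absurd hij (hypos i).ne'
      | succ j =>
        rw [Fin.cons_succ, Fin.cons_succ] at hij
        exact congrArg Fin.succ (hymono.injective hij)
  have hgeval : ∀ i : Fin (t+1), r.eval (g i) = 0 := by
    intro i
    induction i using Fin.cases with
    | zero => rw [hg, Fin.cons_zero]; exact hr0
    | succ i => rw [hg, Fin.cons_succ]; exact hy0 i
  have hrz : r = 0 :=
    Polynomial.eq_zero_of_natDegree_lt_card_of_eval_eq_zero r hginj hgeval
      (by rw [Fintype.card_fin]; omega)
  have hPq : P = q := by
    have h : P - q = 0 := by rw [← hr]; exact hrz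
    exact sub_eq_zero.mp h
  rw [hPq] at hcon
  exact lt_irrefl _ hcon
end

section
/- Reduction of the worst-case contraction factor to 2×2 blocks: let A ∈ ℝ^{m×n} (m ≤ n) have full row rank m with singular values σ₁, …, σ_m > 0, let β > 0, let M be the primal-dual update matrix of A with parameter β, let T ≥ 1 and η₁, …, η_T ∈ ℝ, and set Γ = (I − η_T M)(I − η_{T−1} M)⋯(I − η₁ M). Then the supremum of ‖Γ w‖₂/‖w‖₂ over all nonzero w ∈ ℝ^{n+m} orthogonal to the kernel of M equals the maximum over i ∈ {1, …, m} of the operator norm (largest singular value) of the 2×2 matrix (I₂ − η_T B(σᵢ))(I₂ − η_{T−1} B(σᵢ))⋯(I₂ − η₁ B(σᵢ)). -/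
open Matrix

private lemma dot_self_nonneg' {ι : Type*} [Fintype ι] (x : ι → ℝ) : 0 ≤ x ⬝ᵥ x :=
  Finset.sum_nonneg fun i _ => mul_self_nonneg (x i)

private lemma dot_self_pos {ι : Type*} [Fintype ι] {x : ι → ℝ} (hx : x ≠ 0) : 0 < x ⬝ᵥ x :=
  lt_of_le_of_ne (dot_self_nonneg' x) fun h => hx (dotProduct_self_eq_zero.mp h.symm)

private lemma sum_dot' {ι κ : Type*} [Fintype ι] [Fintype κ] (f : κ → ι → ℝ) (y : ι → ℝ) :
    (∑ k, f k) ⬝ᵥ y = ∑ k, f k ⬝ᵥ y := by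
  simp [dotProduct, Finset.sum_apply, Finset.sum_mul]
  exact Finset.sum_comm

private lemma dot_sum' {ι κ : Type*} [Fintype ι] [Fintype κ] (y : ι → ℝ) (f : κ → ι → ℝ) :
    y ⬝ᵥ (∑ k, f k) = ∑ k, y ⬝ᵥ f k := by
  simp [dotProduct, Finset.sum_apply, Finset.mul_sum]
  exact Finset.sum_comm

private lemma frob_bound {ι : Type*} [Fintype ι] (P : Matrix ι ι ℝ) (x : ι → ℝ) :
    P.mulVec x ⬝ᵥ P.mulVec x ≤ (∑ j, ∑ k, (P j k)^2) * (x ⬝ᵥ x) := by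
  have h : ∀ j, (P.mulVec x j) ^ 2 ≤ (∑ k, (P j k)^2) * (x ⬝ᵥ x) := fun j => by
    simpa [Matrix.mulVec, dotProduct, sq] using
      Finset.sum_mul_sq_le_sq_mul_sq Finset.univ (fun k => P j k) x
  calc P.mulVec x ⬝ᵥ P.mulVec x = ∑ j, (P.mulVec x j)^2 := by simp [dotProduct, sq]
    _ ≤ ∑ j, (∑ k, (P j k)^2) * (x ⬝ᵥ x) := Finset.sum_le_sum fun j _ => h j
    _ = (∑ j, ∑ k, (P j k)^2) * (x ⬝ᵥ x) := by rw [Finset.sum_mul]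

private lemma ratio_bdd {ι : Type*} [Fintype ι] (P : Matrix ι ι ℝ) (x : ι → ℝ) :
    Real.sqrt (P.mulVec x ⬝ᵥ P.mulVec x) / Real.sqrt (x ⬝ᵥ x)
      ≤ Real.sqrt (∑ j, ∑ k, (P j k)^2) := by
  rcases eq_or_ne x 0 with rfl | hx
  · simp [Matrix.mulVec_zero, Real.sqrt_nonneg]
  · have hxx : 0 < x ⬝ᵥ x := dot_self_pos hx
    rw [div_le_iff₀ (Real.sqrt_pos.mpr hxx), ← Real.sqrt_mul (by positivity)]
    exact Real.sqrt_le_sqrt (frob_bound P x)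

private lemma ratio_set_bddAbove {ι : Type*} [Fintype ι] (P : Matrix ι ι ℝ) (D : Set (ι → ℝ)) :
    BddAbove ((fun x => Real.sqrt (P.mulVec x ⬝ᵥ P.mulVec x) / Real.sqrt (x ⬝ᵥ x)) '' D) :=
  ⟨Real.sqrt (∑ j, ∑ k, (P j k)^2), by rintro r ⟨x, -, rfl⟩; exact ratio_bdd P x⟩

private lemma ratio_sSup_nonneg {ι : Type*} [Fintype ι] (P : Matrix ι ι ℝ) {D : Set (ι → ℝ)}
    (hD : D.Nonempty) :
    0 ≤ sSup ((fun x => Real.sqrt (P.mulVec x ⬝ᵥ P.mulVec x) / Real.sqrt (x ⬝ᵥ x)) '' D) := by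
  obtain ⟨x, hx⟩ := hD
  exact le_trans (div_nonneg (Real.sqrt_nonneg _) (Real.sqrt_nonneg _))
    (le_csSup (ratio_set_bddAbove P D) ⟨x, hx, rfl⟩)

private lemma ratio_op {ι : Type*} [Fintype ι] (P : Matrix ι ι ℝ) (x : ι → ℝ) :
    P.mulVec x ⬝ᵥ P.mulVec x ≤
      (sSup ((fun y => Real.sqrt (P.mulVec y ⬝ᵥ P.mulVec y) / Real.sqrt (y ⬝ᵥ y)) ''
        {y | y ≠ 0}))^2 * (x ⬝ᵥ x) := by
  rcases eq_or_ne x 0 with rfl | hx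
  · simp [Matrix.mulVec_zero]
  · set s := sSup ((fun y => Real.sqrt (P.mulVec y ⬝ᵥ P.mulVec y) / Real.sqrt (y ⬝ᵥ y)) ''
      {y | y ≠ 0}) with hs
    have hmem : Real.sqrt (P.mulVec x ⬝ᵥ P.mulVec x) / Real.sqrt (x ⬝ᵥ x) ∈
        ((fun y => Real.sqrt (P.mulVec y ⬝ᵥ P.mulVec y) / Real.sqrt (y ⬝ᵥ y)) '' {y | y ≠ 0}) :=
      ⟨x, hx, rfl⟩
    have hle := le_csSup (ratio_set_bddAbove P _) hmem
    have hs0 : 0 ≤ s := le_trans (div_nonneg (Real.sqrt_nonneg _) (Real.sqrt_nonneg _)) hle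
    have hxx : 0 < x ⬝ᵥ x := dot_self_pos hx
    have h1 : Real.sqrt (P.mulVec x ⬝ᵥ P.mulVec x) ≤ s * Real.sqrt (x ⬝ᵥ x) := by
      rwa [div_le_iff₀ (Real.sqrt_pos.mpr hxx)] at hle
    have h2 := mul_self_le_mul_self (Real.sqrt_nonneg _) h1
    calc P.mulVec x ⬝ᵥ P.mulVec x
        = Real.sqrt (P.mulVec x ⬝ᵥ P.mulVec x) * Real.sqrt (P.mulVec x ⬝ᵥ P.mulVec x) := by
          rw [Real.mul_self_sqrt (dot_self_nonneg' _)]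
      _ ≤ (s * Real.sqrt (x ⬝ᵥ x)) * (s * Real.sqrt (x ⬝ᵥ x)) := h2
      _ = s^2 * (x ⬝ᵥ x) := by
          rw [mul_mul_mul_comm, ← sq, ← sq, Real.sq_sqrt (dot_self_nonneg' _)]


/-- **Reduction of the worst-case contraction factor to 2×2 blocks.**
For the primal-dual update matrix `M` of a full-row-rank `A` with singular values
`σ₁, …, σ_m > 0` (encoded by an orthonormal family of eigenvectors of `AᵀA` with
eigenvalues `σᵢ²`), and `Γ = (I − η_T M)⋯(I − η₁ M)`, the supremum of `‖Γw‖₂/‖w‖₂`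
over nonzero `w` orthogonal to the kernel of `M` equals the maximum over `i` of the
operator norm of `(I₂ − η_T B(σᵢ))⋯(I₂ − η₁ B(σᵢ))`, where `B(σ) = [[βσ², σ], [−σ, 0]]`. -/
theorem stmt18 (m n : ℕ) (hm : 0 < m) (hmn : m ≤ n) (A : Matrix (Fin m) (Fin n) ℝ)
    (hrank : A.rank = m) (β : ℝ) (hβ : 0 < β)
    (σ : Fin m → ℝ) (hσpos : ∀ i, 0 < σ i)
    (v : Fin m → (Fin n → ℝ))
    (horth : ∀ i j, v i ⬝ᵥ v j = if i = j then (1 : ℝ) else 0)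
    (heig : ∀ i, (Aᵀ * A).mulVec (v i) = (σ i ^ 2) • v i)
    (M : Matrix (Fin n ⊕ Fin m) (Fin n ⊕ Fin m) ℝ)
    (hM : M = Matrix.fromBlocks (β • (Aᵀ * A)) Aᵀ (-A) 0)
    (B : ℝ → Matrix (Fin 2) (Fin 2) ℝ)
    (hB : ∀ s : ℝ, B s = !![β * s ^ 2, s; -s, 0])
    (T : ℕ) (hT : 1 ≤ T) (η : Fin T → ℝ)
    (Γ : Matrix (Fin n ⊕ Fin m) (Fin n ⊕ Fin m) ℝ)
    (hΓ : Γ = ((List.ofFn (fun t : Fin T =>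
        (1 : Matrix (Fin n ⊕ Fin m) (Fin n ⊕ Fin m) ℝ) - η t • M)).reverse).prod) :
    sSup ((fun w : Fin n ⊕ Fin m → ℝ =>
        Real.sqrt (Γ.mulVec w ⬝ᵥ Γ.mulVec w) / Real.sqrt (w ⬝ᵥ w)) ''
      {w | w ≠ 0 ∧ ∀ z : Fin n ⊕ Fin m → ℝ, M.mulVec z = 0 → w ⬝ᵥ z = 0}) =
    sSup (Set.range (fun i : Fin m =>
      sSup ((fun u : Fin 2 → ℝ =>
          Real.sqrt ((((List.ofFn (fun t : Fin T =>
              (1 : Matrix (Fin 2) (Fin 2) ℝ) - η t • B (σ i))).reverse).prod.mulVec u) ⬝ᵥ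
            (((List.ofFn (fun t : Fin T =>
              (1 : Matrix (Fin 2) (Fin 2) ℝ) - η t • B (σ i))).reverse).prod.mulVec u)) /
          Real.sqrt (u ⬝ᵥ u)) ''
        {u : Fin 2 → ℝ | u ≠ 0}))) := by
  classical
  have hσ : ∀ i, σ i ≠ 0 := fun i => ne_of_gt (hσpos i)
  set u : Fin m → Fin m → ℝ := fun i => (σ i)⁻¹ • A.mulVec (v i) with hu
  have hAv : ∀ i, A.mulVec (v i) = σ i • u i := fun i => by
    rw [hu]; simp only [smul_smul, mul_inv_cancel₀ (hσ i), one_smul]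
  have hAtu : ∀ i, Aᵀ.mulVec (u i) = σ i • v i := fun i => by
    rw [hu]
    simp only [Matrix.mulVec_smul, Matrix.mulVec_mulVec, heig, smul_smul]
    congr 1
    field_simp [sq]
  have hAvAv : ∀ i j, A.mulVec (v i) ⬝ᵥ A.mulVec (v j)
      = σ j ^ 2 * (if i = j then 1 else 0) := fun i j => by
    calc A.mulVec (v i) ⬝ᵥ A.mulVec (v j)
        = v i ⬝ᵥ Aᵀ.mulVec (A.mulVec (v j)) := by
          rw [dotProduct_mulVec (v i) Aᵀ, vecMul_transpose]
      _ = v i ⬝ᵥ (σ j ^ 2 • v j) := by rw [Matrix.mulVec_mulVec, heig]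
      _ = σ j ^ 2 * (if i = j then 1 else 0) := by
          rw [dotProduct_smul, horth, smul_eq_mul]
  have huu : ∀ i j, u i ⬝ᵥ u j = if i = j then (1:ℝ) else 0 := fun i j => by
    rw [hu]
    simp only [smul_dotProduct, dotProduct_smul, hAvAv, smul_eq_mul]
    by_cases h : i = j
    · subst h; simp [sq]; field_simp; exact div_self (hσ i)
    · simp [h]
  -- the embedding of 2-vectors
  set E : Fin m → (Fin 2 → ℝ) → (Fin n ⊕ Fin m → ℝ) :=
    fun i c => Sum.elim (c 0 • v i) (c 1 • u i) with hE
  have hEE : ∀ i j c d, E i c ⬝ᵥ E j d = (if i = j then (1:ℝ) else 0) * (c ⬝ᵥ d) := by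
    intro i j c d
    rw [hE]
    simp only [sumElim_dotProduct_sumElim, smul_dotProduct, dotProduct_smul, horth, huu,
      smul_eq_mul]
    by_cases h : i = j <;> simp [h, dotProduct, Fin.sum_univ_two] <;> ring
  have hEdot : ∀ i c, E i c ⬝ᵥ E i c = c ⬝ᵥ c := fun i c => by simp [hEE]
  have hEne : ∀ i c, c ≠ 0 → E i c ≠ 0 := by
    intro i c hc h0
    have h1 := hEdot i c
    rw [h0] at h1
    simp only [zero_dotProduct] at h1
    exact hc (dotProduct_self_eq_zero.mp h1.symm)
  have hEadd : ∀ i c d, E i (c + d) = E i c + E i d := by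
    intro i c d; rw [hE]; funext x; cases x <;> simp [add_smul]
  have hEsmul : ∀ i (a : ℝ) c, E i (a • c) = a • E i c := by
    intro i a c; rw [hE]; funext x; cases x <;> simp [smul_smul] <;> ring
  have hEsub : ∀ i c d, E i (c - d) = E i c - E i d := by
    intro i c d; rw [hE]; funext x; cases x <;> simp [sub_smul]
  have hME : ∀ i c, M.mulVec (E i c) = E i ((B (σ i)).mulVec c) := by
    intro i c
    rw [hM, hE]
    simp only [Sum.elim_comp_inl, Sum.elim_comp_inr]
    rw [fromBlocks_mulVec]
    have htop : (β • (Aᵀ * A)) *ᵥ ((Sum.elim (c 0 • v i) (c 1 • u i)) ∘ Sum.inl)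
        + Aᵀ *ᵥ ((Sum.elim (c 0 • v i) (c 1 • u i)) ∘ Sum.inr)
        = (β * σ i ^ 2 * c 0 + σ i * c 1) • v i := by
      simp only [Sum.elim_comp_inl, Sum.elim_comp_inr, Matrix.mulVec_smul,
        smul_mulVec, heig, hAtu]
      funext x; simp; ring
    have hbot : (-A) *ᵥ ((Sum.elim (c 0 • v i) (c 1 • u i)) ∘ Sum.inl)
        + (0 : Matrix (Fin m) (Fin m) ℝ) *ᵥ ((Sum.elim (c 0 • v i) (c 1 • u i)) ∘ Sum.inr)
        = (-(σ i * c 0)) • u i := by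
      simp only [Sum.elim_comp_inl, Sum.elim_comp_inr, Matrix.mulVec_smul, neg_mulVec, hAv,
        Matrix.zero_mulVec, add_zero]
      funext x; simp; ring
    rw [htop, hbot]
    have hc0 : (B (σ i)).mulVec c 0 = β * σ i ^ 2 * c 0 + σ i * c 1 := by
      simp [hB, Matrix.mulVec, dotProduct, Fin.sum_univ_two]
    have hc1 : (B (σ i)).mulVec c 1 = -(σ i * c 0) := by
      simp [hB, Matrix.mulVec, dotProduct, Fin.sum_univ_two]
    rw [hc0, hc1]
  have hprod : ∀ (l : List ℝ) i c,
      ((l.map (fun e => (1 : Matrix (Fin n ⊕ Fin m) (Fin n ⊕ Fin m) ℝ) - e • M)).prod).mulVec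
        (E i c)
      = E i (((l.map (fun e => (1 : Matrix (Fin 2) (Fin 2) ℝ) - e • B (σ i))).prod).mulVec c) := by
    intro l
    induction l with
    | nil => intro i c; simp
    | cons e t ih =>
      intro i c
      simp only [List.map_cons, List.prod_cons, ← Matrix.mulVec_mulVec, ih]
      rw [Matrix.sub_mulVec, Matrix.sub_mulVec, Matrix.one_mulVec, Matrix.one_mulVec,
        smul_mulVec, smul_mulVec, hME, ← hEsmul, ← hEsub]
  -- orthogonality to the kernel of M
  have hkercomp : ∀ (z : Fin n ⊕ Fin m → ℝ), M *ᵥ z = 0 →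
      A *ᵥ (z ∘ Sum.inl) = 0 ∧ Aᵀ *ᵥ (z ∘ Sum.inr) = 0 := by
    intro z hz
    rw [hM] at hz
    have hz' : z = Sum.elim (z ∘ Sum.inl) (z ∘ Sum.inr) := by funext x; cases x <;> rfl
    rw [hz', fromBlocks_mulVec] at hz
    simp only [Sum.elim_comp_inl, Sum.elim_comp_inr] at hz
    have hbot : (-A) *ᵥ (z ∘ Sum.inl) + (0 : Matrix (Fin m) (Fin m) ℝ) *ᵥ (z ∘ Sum.inr) = 0 := by
      funext x; exact congrFun hz (Sum.inr x)
    have htop : (β • (Aᵀ * A)) *ᵥ (z ∘ Sum.inl) + Aᵀ *ᵥ (z ∘ Sum.inr) = 0 := by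
      funext x; exact congrFun hz (Sum.inl x)
    rw [Matrix.zero_mulVec, add_zero, neg_mulVec, neg_eq_zero] at hbot
    constructor
    · exact hbot
    · rw [smul_mulVec, ← Matrix.mulVec_mulVec, hbot, Matrix.mulVec_zero, smul_zero,
        zero_add] at htop
      exact htop
  have hperp : ∀ i c (z : Fin n ⊕ Fin m → ℝ), M *ᵥ z = 0 → E i c ⬝ᵥ z = 0 := by
    intro i c z hz
    obtain ⟨hz1, hz2⟩ := hkercomp z hz
    have hz' : z = Sum.elim (z ∘ Sum.inl) (z ∘ Sum.inr) := by funext x; cases x <;> rfl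
    rw [hE, hz', sumElim_dotProduct_sumElim, smul_dotProduct, smul_dotProduct]
    have hv : v i ⬝ᵥ (z ∘ Sum.inl) = 0 := by
      have hvi : v i = (σ i ^ 2)⁻¹ • ((Aᵀ * A) *ᵥ v i) := by
        rw [heig, smul_smul, inv_mul_cancel₀ (pow_ne_zero 2 (hσ i)), one_smul]
      rw [hvi, smul_dotProduct]
      rw [← Matrix.mulVec_mulVec]
      have : (Aᵀ *ᵥ (A *ᵥ v i)) ⬝ᵥ (z ∘ Sum.inl) = (A *ᵥ v i) ⬝ᵥ (A *ᵥ (z ∘ Sum.inl)) := by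
        rw [dotProduct_comm, dotProduct_mulVec, vecMul_transpose, dotProduct_comm]
      rw [this, hz1, dotProduct_zero, smul_zero]
    have hu' : u i ⬝ᵥ (z ∘ Sum.inr) = 0 := by
      have hui : u i = (σ i)⁻¹ • (A *ᵥ v i) := rfl
      rw [hui, smul_dotProduct]
      have : (A *ᵥ v i) ⬝ᵥ (z ∘ Sum.inr) = v i ⬝ᵥ (Aᵀ *ᵥ (z ∘ Sum.inr)) := by
        rw [dotProduct_mulVec (v i) Aᵀ, vecMul_transpose]
      rw [this, hz2, dotProduct_zero, smul_zero]
    rw [hv, hu', smul_zero, smul_zero, add_zero]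
  -- the u i span ℝ^m
  haveI : Nonempty (Fin m) := ⟨⟨0, hm⟩⟩
  have hspan : ∀ y : Fin m → ℝ, ∑ i, (y ⬝ᵥ u i) • u i = y := by
    have hli : LinearIndependent ℝ u := by
      rw [Fintype.linearIndependent_iff]
      intro g hg j
      have := congrArg (fun y => y ⬝ᵥ u j) hg
      simp only [sum_dot', smul_dotProduct, huu, smul_eq_mul, mul_ite, mul_one, mul_zero,
        Finset.sum_ite_eq', Finset.mem_univ, if_true, zero_dotProduct] at this
      exact this
    have htop := hli.span_eq_top_of_card_eq_finrank (by simp [Module.finrank_fin_fun])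
    intro y
    have hy : y ∈ Submodule.span ℝ (Set.range u) := htop ▸ Submodule.mem_top
    obtain ⟨c, hc⟩ := (Submodule.mem_span_range_iff_exists_fun ℝ).mp hy
    have hcoef : ∀ j, y ⬝ᵥ u j = c j := by
      intro j
      rw [← hc, sum_dot']
      simp only [smul_dotProduct, huu, smul_eq_mul, mul_ite, mul_one, mul_zero,
        Finset.sum_ite_eq', Finset.mem_univ, if_true]
    calc ∑ i, (y ⬝ᵥ u i) • u i = ∑ i, c i • u i := by
          refine Finset.sum_congr rfl fun i _ => by rw [hcoef]
      _ = y := hc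
  -- rewrite products in map form
  have hΓ' : Γ = (((List.ofFn η).reverse).map
      (fun e => (1 : Matrix (Fin n ⊕ Fin m) (Fin n ⊕ Fin m) ℝ) - e • M)).prod := by
    rw [hΓ, List.map_reverse, List.map_ofFn]
    rfl
  have hQ : ∀ i, ((List.ofFn (fun t : Fin T =>
        (1 : Matrix (Fin 2) (Fin 2) ℝ) - η t • B (σ i))).reverse).prod
      = (((List.ofFn η).reverse).map
          (fun e => (1 : Matrix (Fin 2) (Fin 2) ℝ) - e • B (σ i))).prod := fun i => by
    rw [List.map_reverse, List.map_ofFn]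
    rfl
  set l : List ℝ := (List.ofFn η).reverse with hl
  set Qi : Fin m → Matrix (Fin 2) (Fin 2) ℝ := fun i =>
    ((List.ofFn (fun t : Fin T =>
      (1 : Matrix (Fin 2) (Fin 2) ℝ) - η t • B (σ i))).reverse).prod with hQi
  -- intertwining for the actual matrices
  have hinter : ∀ i c, Γ.mulVec (E i c) = E i ((Qi i).mulVec c) := by
    intro i c
    rw [hΓ', hQi]
    simp only [hQ]
    exact hprod l i c
  have i0 : Fin m := ⟨0, hm⟩
  have he1 : (![1, 0] : Fin 2 → ℝ) ≠ 0 := fun h => by simpa using congrFun h 0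
  -- nonemptiness of the LHS domain
  have hw0mem : (E i0 ![1, 0]) ∈ {w : Fin n ⊕ Fin m → ℝ |
      w ≠ 0 ∧ ∀ z : Fin n ⊕ Fin m → ℝ, M.mulVec z = 0 → w ⬝ᵥ z = 0} :=
    ⟨hEne i0 ![1, 0] he1, fun z hz => hperp i0 ![1, 0] z hz⟩
  have hSne : ((fun w : Fin n ⊕ Fin m → ℝ =>
      Real.sqrt (Γ.mulVec w ⬝ᵥ Γ.mulVec w) / Real.sqrt (w ⬝ᵥ w)) ''
      {w | w ≠ 0 ∧ ∀ z : Fin n ⊕ Fin m → ℝ, M.mulVec z = 0 → w ⬝ᵥ z = 0}).Nonempty :=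
    ⟨_, ⟨E i0 ![1, 0], hw0mem, rfl⟩⟩
  have hSbdd : BddAbove ((fun w : Fin n ⊕ Fin m → ℝ =>
      Real.sqrt (Γ.mulVec w ⬝ᵥ Γ.mulVec w) / Real.sqrt (w ⬝ᵥ w)) ''
      {w | w ≠ 0 ∧ ∀ z : Fin n ⊕ Fin m → ℝ, M.mulVec z = 0 → w ⬝ᵥ z = 0}) :=
    ratio_set_bddAbove Γ _
  -- the RHS function
  set G : Fin m → ℝ := fun i =>
    sSup ((fun u : Fin 2 → ℝ =>
        Real.sqrt ((Qi i).mulVec u ⬝ᵥ (Qi i).mulVec u) / Real.sqrt (u ⬝ᵥ u)) ''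
      {u : Fin 2 → ℝ | u ≠ 0}) with hG
  show _ = sSup (Set.range G)
  have hGbdd : BddAbove (Set.range G) := (Set.finite_range G).bddAbove
  have hgle : ∀ i, G i ≤ sSup (Set.range G) := fun i => le_csSup hGbdd ⟨i, rfl⟩
  have hG0 : ∀ i, 0 ≤ G i := fun i => ratio_sSup_nonneg (Qi i) ⟨![1, 0], he1⟩
  have hs0 : 0 ≤ sSup (Set.range G) := le_trans (hG0 i0) (hgle i0)
  have hop : ∀ i c, (Qi i).mulVec c ⬝ᵥ (Qi i).mulVec c ≤ (G i) ^ 2 * (c ⬝ᵥ c) :=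
    fun i c => ratio_op (Qi i) c
  -- subset inclusion: each 2×2 ratio set embeds into the big ratio set
  have hsub : ∀ i : Fin m,
      ((fun u : Fin 2 → ℝ =>
          Real.sqrt ((Qi i).mulVec u ⬝ᵥ (Qi i).mulVec u) / Real.sqrt (u ⬝ᵥ u)) ''
        {u : Fin 2 → ℝ | u ≠ 0}) ⊆
      ((fun w : Fin n ⊕ Fin m → ℝ =>
          Real.sqrt (Γ.mulVec w ⬝ᵥ Γ.mulVec w) / Real.sqrt (w ⬝ᵥ w)) ''
        {w | w ≠ 0 ∧ ∀ z : Fin n ⊕ Fin m → ℝ, M.mulVec z = 0 → w ⬝ᵥ z = 0}) := by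
    rintro i r ⟨c, hc, rfl⟩
    refine ⟨E i c, ⟨hEne i c hc, fun z hz => hperp i c z hz⟩, ?_⟩
    simp only [hinter i c, hEdot]
  -- sum decomposition dot product identity
  have hsumdot : ∀ (d e : Fin m → Fin 2 → ℝ),
      (∑ i, E i (d i)) ⬝ᵥ (∑ j, E j (e j)) = ∑ i, d i ⬝ᵥ e i := by
    intro d e
    rw [sum_dot']
    refine Finset.sum_congr rfl fun i _ => ?_
    rw [dot_sum']
    simp only [hEE, ite_mul, one_mul, zero_mul]
    simp [Finset.sum_ite_eq]
  have hmulVec_sum : ∀ (P : Matrix (Fin n ⊕ Fin m) (Fin n ⊕ Fin m) ℝ)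
      (f : Fin m → (Fin n ⊕ Fin m → ℝ)), P.mulVec (∑ i, f i) = ∑ i, P.mulVec (f i) := by
    intro P f
    exact map_sum P.mulVecLin f Finset.univ
  refine le_antisymm (csSup_le hSne ?_) (csSup_le (Set.range_nonempty G) ?_)
  · -- hard direction
    rintro r ⟨w, ⟨hw0, hwperp⟩, rfl⟩
    set w1 : Fin n → ℝ := w ∘ Sum.inl with hw1d
    set w2 : Fin m → ℝ := w ∘ Sum.inr with hw2d
    have hwelim : w = Sum.elim w1 w2 := by funext x; cases x <;> rfl
    set c : Fin m → Fin 2 → ℝ := fun i => ![w1 ⬝ᵥ v i, w2 ⬝ᵥ u i] with hcd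
    have hc0 : ∀ i, c i 0 = w1 ⬝ᵥ v i := fun i => rfl
    have hc1 : ∀ i, c i 1 = w2 ⬝ᵥ u i := fun i => rfl
    have hw2sum : ∑ i, c i 1 • u i = w2 := by
      simp only [hc1]; exact hspan w2
    set x' : Fin n → ℝ := w1 - ∑ i, c i 0 • v i with hx'd
    have hAx' : A.mulVec x' = (0 : Fin m → ℝ) := by
      rw [hx'd, Matrix.mulVec_sub]
      have h1 : A.mulVec (∑ i, c i 0 • v i) = ∑ i, (σ i * c i 0) • u i := by
        have : A.mulVec (∑ i, c i 0 • v i) = ∑ i, c i 0 • A.mulVec (v i) := by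
          funext x
          simp [Matrix.mulVec, dotProduct, Finset.sum_apply, Finset.mul_sum]
          rw [Finset.sum_comm]
          refine Finset.sum_congr rfl fun i _ => Finset.sum_congr rfl fun j _ => by ring
        rw [this]
        refine Finset.sum_congr rfl fun i _ => by rw [hAv, smul_smul, mul_comm]
      have h2 : A.mulVec w1 = ∑ i, (σ i * c i 0) • u i := by
        conv_lhs => rw [← hspan (A.mulVec w1)]
        refine Finset.sum_congr rfl fun i _ => ?_
        congr 1
        rw [hc0]
        calc A.mulVec w1 ⬝ᵥ u i = u i ⬝ᵥ A.mulVec w1 := dotProduct_comm _ _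
          _ = (u i ᵥ* A) ⬝ᵥ w1 := dotProduct_mulVec _ _ _
          _ = (Aᵀ.mulVec (u i)) ⬝ᵥ w1 := by rw [mulVec_transpose]
          _ = (σ i • v i) ⬝ᵥ w1 := by rw [hAtu]
          _ = σ i * (w1 ⬝ᵥ v i) := by rw [smul_dotProduct, smul_eq_mul, dotProduct_comm]
      rw [h1, h2, sub_self]
    have hzker : M.mulVec (Sum.elim x' (0 : Fin m → ℝ)) = 0 := by
      rw [hM, fromBlocks_mulVec]
      simp only [Sum.elim_comp_inl, Sum.elim_comp_inr, Matrix.mulVec_zero, add_zero]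
      have htop : (β • (Aᵀ * A)).mulVec x' = 0 := by
        rw [smul_mulVec, ← Matrix.mulVec_mulVec, hAx', Matrix.mulVec_zero, smul_zero]
      have hbot : (-A).mulVec x' = 0 := by rw [neg_mulVec, hAx', neg_zero]
      rw [htop, hbot]
      funext x; cases x <;> simp
    have hw1x' : w1 ⬝ᵥ x' = 0 := by
      have := hwperp _ hzker
      rw [hwelim, sumElim_dotProduct_sumElim, dotProduct_zero, add_zero] at this
      exact this
    have hvx' : ∀ j, v j ⬝ᵥ x' = 0 := by
      intro j
      rw [hx'd, dotProduct_sub, dot_sum']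
      simp only [dotProduct_smul, horth, smul_eq_mul]
      rw [Finset.sum_congr rfl (fun i _ => by rw [mul_comm, ite_mul, one_mul, zero_mul]),
        Finset.sum_ite_eq]
      simp [hc0, dotProduct_comm]
    have hgen : ∀ y : Fin n → ℝ, x' ⬝ᵥ y = w1 ⬝ᵥ y - ∑ i, c i 0 * (v i ⬝ᵥ y) := by
      intro y
      rw [hx'd, sub_dotProduct, sum_dot']
      simp only [smul_dotProduct, smul_eq_mul]
    have hx'0 : x' = 0 := by
      refine dotProduct_self_eq_zero.mp ?_
      rw [hgen x', hw1x']
      simp only [hvx', mul_zero, Finset.sum_const_zero, sub_zero]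
    have hw1sum : ∑ i, c i 0 • v i = w1 := by
      have h0 : w1 - ∑ i, c i 0 • v i = 0 := by rw [← hx'd]; exact hx'0
      exact (sub_eq_zero.mp h0).symm
    have hdecomp : w = ∑ i, E i (c i) := by
      funext x
      cases x with
      | inl j =>
        calc w (Sum.inl j) = w1 j := rfl
          _ = (∑ i, c i 0 • v i) j := by rw [hw1sum]
          _ = ∑ i, (c i 0 • v i) j := Finset.sum_apply _ _ _
          _ = (∑ i, E i (c i)) (Sum.inl j) := by rw [Finset.sum_apply]; rfl
      | inr j =>
        calc w (Sum.inr j) = w2 j := rfl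
          _ = (∑ i, c i 1 • u i) j := by rw [hw2sum]
          _ = ∑ i, (c i 1 • u i) j := Finset.sum_apply _ _ _
          _ = (∑ i, E i (c i)) (Sum.inr j) := by rw [Finset.sum_apply]; rfl
    have hΓw : Γ.mulVec w = ∑ i, E i ((Qi i).mulVec (c i)) := by
      conv_lhs => rw [hdecomp]
      rw [hmulVec_sum]
      exact Finset.sum_congr rfl fun i _ => hinter i (c i)
    have hnum : Γ.mulVec w ⬝ᵥ Γ.mulVec w
        = ∑ i, ((Qi i).mulVec (c i) ⬝ᵥ (Qi i).mulVec (c i)) := by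
      rw [hΓw]; exact hsumdot _ _
    have hden : w ⬝ᵥ w = ∑ i, c i ⬝ᵥ c i := by
      conv_lhs => rw [hdecomp]
      exact hsumdot _ _
    have hnumle : Γ.mulVec w ⬝ᵥ Γ.mulVec w
        ≤ (sSup (Set.range G)) ^ 2 * (w ⬝ᵥ w) := by
      rw [hnum, hden, Finset.mul_sum]
      refine Finset.sum_le_sum fun i _ => ?_
      refine le_trans (hop i (c i)) ?_
      exact mul_le_mul_of_nonneg_right (pow_le_pow_left₀ (hG0 i) (hgle i) 2)
        (dot_self_nonneg' _)
    have hww : 0 < w ⬝ᵥ w := dot_self_pos hw0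
    rw [div_le_iff₀ (Real.sqrt_pos.mpr hww)]
    calc Real.sqrt (Γ.mulVec w ⬝ᵥ Γ.mulVec w)
        ≤ Real.sqrt ((sSup (Set.range G)) ^ 2 * (w ⬝ᵥ w)) := Real.sqrt_le_sqrt hnumle
      _ = sSup (Set.range G) * Real.sqrt (w ⬝ᵥ w) := by
          rw [Real.sqrt_mul (by positivity), Real.sqrt_sq hs0]
  · -- easy direction
    rintro r ⟨i, rfl⟩
    exact csSup_le_csSup hSbdd ⟨_, ⟨![1, 0], he1, rfl⟩⟩ (hsub i)
end
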